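/- arXiv:1108.5144 — 6 statements merged into one kernel-verified Lean document; each statement's English description precedes it below -/
import Mathlib

section
/- If α(t) = μ'(t)/(4a(t)μ(t)) − d(t)/(2a(t)) (with a(t) ≠ 0, μ(t) ≠ 0), then α satisfies the Riccati-type equation α' + b + 2cα + 4aα² = c₀·a·β⁴ if and only if μ satisfies the linear second-order equation μ'' − τ(t)μ' + 4σ(t)μ = c₀·(2a)²β⁴μ, where τ = a'/a − 2c + 4d and σ = ab − cd + d² + (d/2)(a'/a − d'/d). -/
/-!
The substitution `α = μ'/(4aμ) − d/(2a)` is the classical linearisation of a Riccati equation: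
multiplying the Riccati residual `α' + b + 2cα + 4aα² − f` by `4aμ` clears every denominator
and leaves exactly the residual `μ'' − τμ' + 4σμ − 4afμ` of the linear equation. Since `4aμ`
never vanishes, one residual vanishes iff the other does.
-/

theorem hasDerivAt_riccati_substitution {a d μ ν : ℝ → ℝ} {a₁ d₁ μ₁ ν₁ t : ℝ}
    (ha : HasDerivAt a a₁ t) (hd : HasDerivAt d d₁ t) (hμ : HasDerivAt μ μ₁ t)
    (hν : HasDerivAt ν ν₁ t) (ha0 : a t ≠ 0) (hμ0 : μ t ≠ 0) :
    HasDerivAt (fun s => ν s / (4 * a s * μ s) - d s / (2 * a s))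
      (ν₁ / (4 * a t * μ t) - ν t * (a₁ * μ t + a t * μ₁) / (4 * (a t * μ t) ^ 2)
        - d₁ / (2 * a t) + d t * a₁ / (2 * a t ^ 2)) t := by
  have h4aμ : 4 * a t * μ t ≠ 0 := by positivity
  have h2a : 2 * a t ≠ 0 := by positivity
  refine ((hν.div ((ha.const_mul 4).mul hμ) h4aμ).sub (hd.div (ha.const_mul 2) h2a)).congr_deriv ?_
  simp only [Pi.mul_apply]
  field_simp
  ring

theorem riccati_residual_mul_eq {a a₁ b c d d₁ μ μ₁ μ₂ f : ℝ}
    (ha : a ≠ 0) (hd : d ≠ 0) (hμ : μ ≠ 0) :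
    ((μ₂ / (4 * a * μ) - μ₁ * (a₁ * μ + a * μ₁) / (4 * (a * μ) ^ 2)
        - d₁ / (2 * a) + d * a₁ / (2 * a ^ 2))
      + b + 2 * c * (μ₁ / (4 * a * μ) - d / (2 * a))
      + 4 * a * (μ₁ / (4 * a * μ) - d / (2 * a)) ^ 2 - f) * (4 * a * μ)
      = μ₂ - (a₁ / a - 2 * c + 4 * d) * μ₁
        + 4 * (a * b - c * d + d ^ 2 + d / 2 * (a₁ / a - d₁ / d)) * μ - 4 * a * f * μ := by
  field_simp
  ring

theorem riccati_iff_linear_at {a b c d μ α : ℝ → ℝ} (f t : ℝ)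
    (hα : α = fun s => deriv μ s / (4 * a s * μ s) - d s / (2 * a s))
    (haD : DifferentiableAt ℝ a t) (hdD : DifferentiableAt ℝ d t)
    (hμD : DifferentiableAt ℝ μ t) (hμD2 : DifferentiableAt ℝ (deriv μ) t)
    (ha : a t ≠ 0) (hd : d t ≠ 0) (hμ : μ t ≠ 0) :
    deriv α t + b t + 2 * c t * α t + 4 * a t * α t ^ 2 = f ↔
      deriv (deriv μ) t - (deriv a t / a t - 2 * c t + 4 * d t) * deriv μ t
        + 4 * (a t * b t - c t * d t + d t ^ 2 + d t / 2 * (deriv a t / a t - deriv d t / d t))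
          * μ t = 4 * a t * f * μ t := by
  subst hα
  have hα' := (hasDerivAt_riccati_substitution haD.hasDerivAt hdD.hasDerivAt hμD.hasDerivAt
    hμD2.hasDerivAt ha hμ).deriv
  have hresidual := riccati_residual_mul_eq (b := b t) (c := c t) (f := f) (μ₁ := deriv μ t)
    (μ₂ := deriv (deriv μ) t) (a₁ := deriv a t) (d₁ := deriv d t) ha hd hμ
  have h4aμ : 4 * a t * μ t ≠ 0 := by positivity
  rw [← sub_eq_zero, ← mul_left_inj' h4aμ, zero_mul, hα', hresidual, sub_eq_zero]

theorem riccati_iff_linear_general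
    (a b c d β μ : ℝ → ℝ) (c₀ : ℝ)
    (ha : ∀ t, a t ≠ 0) (hd : ∀ t, d t ≠ 0) (hμ0 : ∀ t, μ t ≠ 0)
    (haD : Differentiable ℝ a)
    (hdD : Differentiable ℝ d)
    (hμD : Differentiable ℝ μ) (hμD2 : Differentiable ℝ (deriv μ))
    (α : ℝ → ℝ)
    (hα : ∀ t, α t = deriv μ t / (4 * a t * μ t) - d t / (2 * a t))
    (τ σ : ℝ → ℝ)
    (hτ : ∀ t, τ t = deriv a t / a t - 2 * c t + 4 * d t)
    (hσ : ∀ t, σ t = a t * b t - c t * d t + (d t) ^ 2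
        + d t / 2 * (deriv a t / a t - deriv d t / d t)) :
    (∀ t, deriv α t + b t + 2 * c t * α t + 4 * a t * (α t) ^ 2
        = c₀ * a t * (β t) ^ 4)
      ↔
    (∀ t, deriv (deriv μ) t - τ t * deriv μ t + 4 * σ t * μ t
        = c₀ * (2 * a t) ^ 2 * (β t) ^ 4 * μ t) := by
  refine forall_congr' fun t => ?_
  rw [hτ, hσ, show c₀ * (2 * a t) ^ 2 * β t ^ 4 * μ t = 4 * a t * (c₀ * a t * β t ^ 4) * μ t by
    ring]
  exact riccati_iff_linear_at _ t (funext hα) (haD t) (hdD t) (hμD t) (hμD2 t) (ha t) (hd t)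
    (hμ0 t)

/-- With `α = μ'/(4aμ) − d/(2a)`, the Riccati equation
`α' + b + 2cα + 4aα² = c₀ a β⁴` holds iff `μ` satisfies the linear equation
`μ'' − τ μ' + 4σ μ = c₀ (2a)² β⁴ μ`, where `τ = a'/a − 2c + 4d` and
`σ = ab − cd + d² + (d/2)(a'/a − d'/d)`. -/
theorem riccati_iff_linear
    (a b c d β μ : ℝ → ℝ) (c₀ : ℝ) (hc₀ : c₀ = 0 ∨ c₀ = 1)
    (ha : ∀ t, a t ≠ 0) (hd : ∀ t, d t ≠ 0) (hμ0 : ∀ t, μ t ≠ 0)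
    (haD : Differentiable ℝ a) (hbD : Differentiable ℝ b)
    (hcD : Differentiable ℝ c) (hdD : Differentiable ℝ d)
    (hβD : Differentiable ℝ β)
    (hμD : Differentiable ℝ μ) (hμD2 : Differentiable ℝ (deriv μ))
    (α : ℝ → ℝ)
    (hα : ∀ t, α t = deriv μ t / (4 * a t * μ t) - d t / (2 * a t))
    (τ σ : ℝ → ℝ)
    (hτ : ∀ t, τ t = deriv a t / a t - 2 * c t + 4 * d t)
    (hσ : ∀ t, σ t = a t * b t - c t * d t + (d t) ^ 2
        + d t / 2 * (deriv a t / a t - deriv d t / d t)) :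
    (∀ t, deriv α t + b t + 2 * c t * α t + 4 * a t * (α t) ^ 2
        = c₀ * a t * (β t) ^ 4)
      ↔
    (∀ t, deriv (deriv μ) t - τ t * deriv μ t + 4 * σ t * μ t
        = c₀ * (2 * a t) ^ 2 * (β t) ^ 4 * μ t) :=
  riccati_iff_linear_general a b c d β μ c₀ ha hd hμ0 haD hdD hμD hμD2 α hα τ σ hτ hσ
end

section
/- Suppose the real functions α, β, γ, δ, ε, κ of t satisfy the Ermakov-type system: α' + b + 2cα + 4aα² = c₀aβ⁴, β' + (c + 4aα)β = 0, γ' + aβ² = 0, δ' + (c + 4aα)δ = f + 2gα + 2c₀aβ³ε, ε' = (g − 2aδ)β, κ' = gδ − aδ² + c₀aβ²ε². Then the substitution ψ(x,t) = μ(t)^{-1/2} exp(i(α x² + δ x + κ)) χ(βx + ε, γ(t)) transforms the Schrödinger equation iψ_t = −aψ_xx + bx²ψ − icxψ_x − idψ − fxψ + igψ_x into the autonomous equation −iχ_τ = −χ_ξξ + c₀ξ²χ, where α = μ'/(4aμ) − d/(2a). -/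
open Complex

private lemma chainHD {F : ℝ × ℝ → ℂ} (hF : ContDiff ℝ (⊤ : ℕ∞) F)
    {u v : ℝ → ℝ} {u' v' : ℝ} {t : ℝ}
    (hu : HasDerivAt u u' t) (hv : HasDerivAt v v' t) :
    HasDerivAt (fun s => F (u s, v s))
      ((u' : ℂ) * fderiv ℝ F (u t, v t) (1, 0)
        + (v' : ℂ) * fderiv ℝ F (u t, v t) (0, 1)) t := by
  have hd := (hF.differentiable (by simp) (u t, v t)).hasFDerivAt
  have hc : HasDerivAt (fun s => (u s, v s)) (u', v') t := hu.prodMk hv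
  have h := hd.comp_hasDerivAt t hc
  refine h.congr_deriv ?_
  have e : ((u', v') : ℝ × ℝ) = u' • ((1:ℝ), (0:ℝ)) + v' • ((0:ℝ), (1:ℝ)) := by simp
  rw [e, map_add, map_smul, map_smul]
  simp [Complex.real_smul]

private lemma partial1_contDiff {F : ℝ × ℝ → ℂ} (hF : ContDiff ℝ (⊤ : ℕ∞) F) :
    ContDiff ℝ (⊤ : ℕ∞) (fun p => fderiv ℝ F p (1, 0)) :=
  (hF.fderiv_right (by simp)).clm_apply contDiff_const

private lemma derivx_eq {χ : ℝ → ℝ → ℂ} (hχ : ContDiff ℝ (⊤ : ℕ∞) (Function.uncurry χ)) (ξ τ : ℝ) :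
    deriv (fun u => χ u τ) ξ = fderiv ℝ (Function.uncurry χ) (ξ, τ) (1, 0) := by
  have h := chainHD hχ (hasDerivAt_id ξ) (hasDerivAt_const ξ τ)
  simpa using h.deriv

private lemma derivt_eq {χ : ℝ → ℝ → ℂ} (hχ : ContDiff ℝ (⊤ : ℕ∞) (Function.uncurry χ)) (ξ τ : ℝ) :
    deriv (fun s => χ ξ s) τ = fderiv ℝ (Function.uncurry χ) (ξ, τ) (0, 1) := by
  have h := chainHD hχ (hasDerivAt_const τ ξ) (hasDerivAt_id τ)
  simpa using h.deriv

private lemma derivxx_eq {χ : ℝ → ℝ → ℂ} (hχ : ContDiff ℝ (⊤ : ℕ∞) (Function.uncurry χ)) (ξ τ : ℝ) :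
    deriv (deriv (fun u => χ u τ)) ξ
      = fderiv ℝ (fun p => fderiv ℝ (Function.uncurry χ) p (1, 0)) (ξ, τ) (1, 0) := by
  have hfun : deriv (fun u => χ u τ) = fun u => fderiv ℝ (Function.uncurry χ) (u, τ) (1, 0) :=
    funext fun u => derivx_eq hχ u τ
  rw [hfun]
  have h := chainHD (partial1_contDiff hχ) (hasDerivAt_id ξ) (hasDerivAt_const ξ τ)
  simpa using h.deriv

/-- Lemma 1: if `α, β, γ, δ, ε, κ` solve the Ermakov-type system, the
substitution `ψ = μ^{-1/2} e^{i(αx²+δx+κ)} χ(βx+ε, γ)` carries solutions `χ` of the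
autonomous equation `−iχ_τ = −χ_ξξ + c₀ξ²χ` into solutions `ψ` of the generalized
driven harmonic oscillator Schrödinger equation. -/
theorem ermakov_transformation
    (a b c d f g : ℝ → ℝ) (c₀ : ℝ) (hc₀ : c₀ = 0 ∨ c₀ = 1)
    (ha : ∀ t, a t ≠ 0)
    (α β γ δ ε κ μ : ℝ → ℝ)
    (haD : Differentiable ℝ a) (hbD : Differentiable ℝ b) (hcD : Differentiable ℝ c)
    (hdD : Differentiable ℝ d) (hfD : Differentiable ℝ f) (hgD : Differentiable ℝ g)
    (hαD : Differentiable ℝ α) (hβD : Differentiable ℝ β) (hγD : Differentiable ℝ γ)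
    (hδD : Differentiable ℝ δ) (hεD : Differentiable ℝ ε) (hκD : Differentiable ℝ κ)
    (hμD : Differentiable ℝ μ) (hμpos : ∀ t, 0 < μ t)
    -- the Ermakov-type system (SysA)–(SysF)
    (hSysA : ∀ t, deriv α t + b t + 2 * c t * α t + 4 * a t * (α t) ^ 2
        = c₀ * a t * (β t) ^ 4)
    (hSysB : ∀ t, deriv β t + (c t + 4 * a t * α t) * β t = 0)
    (hSysC : ∀ t, deriv γ t + a t * (β t) ^ 2 = 0)
    (hSysD : ∀ t, deriv δ t + (c t + 4 * a t * α t) * δ t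
        = f t + 2 * g t * α t + 2 * c₀ * a t * (β t) ^ 3 * ε t)
    (hSysE : ∀ t, deriv ε t = (g t - 2 * a t * δ t) * β t)
    (hSysF : ∀ t, deriv κ t = g t * δ t - a t * (δ t) ^ 2
        + c₀ * a t * (β t) ^ 2 * (ε t) ^ 2)
    -- relation (Alpha): μ'/μ = 4aα + 2d
    (hμα : ∀ t, deriv μ t / μ t = 4 * a t * α t + 2 * d t)
    -- the autonomous equation for χ
    (χ : ℝ → ℝ → ℂ) (hχ : ContDiff ℝ (⊤ : ℕ∞) (Function.uncurry χ))
    (hauto : ∀ ξ τ, -Complex.I * deriv (fun s => χ ξ s) τ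
        = -(deriv (deriv (fun u => χ u τ)) ξ) + c₀ * (ξ : ℂ) ^ 2 * χ ξ τ)
    -- the transformed wave function
    (ψ : ℝ → ℝ → ℂ)
    (hψ : ∀ x t, ψ x t = (Real.sqrt (μ t) : ℂ)⁻¹
        * Complex.exp (Complex.I * ((α t : ℂ) * x ^ 2 + (δ t : ℂ) * x + (κ t : ℂ)))
        * χ (β t * x + ε t) (γ t)) :
    -- ψ satisfies the Schrödinger equation (2)
    ∀ x t, Complex.I * deriv (fun s => ψ x s) t
      = -(a t : ℂ) * deriv (deriv (fun u => ψ u t)) x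
        + (b t : ℂ) * (x : ℂ) ^ 2 * ψ x t
        - Complex.I * (c t : ℂ) * (x : ℂ) * deriv (fun u => ψ u t) x
        - Complex.I * (d t : ℂ) * ψ x t
        - (f t : ℂ) * (x : ℂ) * ψ x t
        + Complex.I * (g t : ℂ) * deriv (fun u => ψ u t) x := by
  intro x t
  have hFc : ContDiff ℝ (⊤ : ℕ∞) (Function.uncurry χ) := hχ
  have hF1c : ContDiff ℝ (⊤ : ℕ∞) (fun p => fderiv ℝ (Function.uncurry χ) p (1, 0)) :=
    partial1_contDiff hFc
  have hμt := hμpos t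
  have hsμ : Real.sqrt (μ t) ≠ 0 := Real.sqrt_ne_zero'.mpr hμt
  have hsq : Real.sqrt (μ t) ^ 2 = μ t := Real.sq_sqrt hμt.le
  have hdμ : deriv μ t = (4 * a t * α t + 2 * d t) * μ t := by
    have h := hμα t
    rw [div_eq_iff (ne_of_gt hμt)] at h
    exact h
  -- derivative of μ^{-1/2}
  have hsqrtD : HasDerivAt (fun s => Real.sqrt (μ s)) (deriv μ t / (2 * Real.sqrt (μ t))) t :=
    (hμD t).hasDerivAt.sqrt (ne_of_gt hμt)
  have hMreal : HasDerivAt (fun s => (Real.sqrt (μ s))⁻¹)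
      (-(2 * a t * α t + d t) * (Real.sqrt (μ t))⁻¹) t := by
    have h := hsqrtD.inv hsμ
    have he : -(deriv μ t / (2 * Real.sqrt (μ t))) / Real.sqrt (μ t) ^ 2
        = -(2 * a t * α t + d t) * (Real.sqrt (μ t))⁻¹ := by
      rw [hdμ, ← hsq]; field_simp; rw [Real.sqrt_sq (Real.sqrt_nonneg _)]; ring
    rwa [he] at h
  have hMD : HasDerivAt (fun s => ((Real.sqrt (μ s) : ℂ))⁻¹)
      ((-(2 * a t * α t + d t) * (Real.sqrt (μ t))⁻¹ : ℝ) : ℂ) t := by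
    have h := hMreal.ofReal_comp
    simpa only [Complex.ofReal_inv] using h
  -- time derivative of the phase and exponential
  have hphase : HasDerivAt
      (fun s => Complex.I * ((α s : ℂ) * (x : ℂ) ^ 2 + (δ s : ℂ) * (x : ℂ) + (κ s : ℂ)))
      (Complex.I * (((deriv α t : ℝ) : ℂ) * (x : ℂ) ^ 2 + ((deriv δ t : ℝ) : ℂ) * (x : ℂ) + ((deriv κ t : ℝ) : ℂ))) t := by
    have hα' := ((hαD t).hasDerivAt.ofReal_comp).mul_const ((x : ℂ) ^ 2)
    have hδ' := ((hδD t).hasDerivAt.ofReal_comp).mul_const ((x : ℂ))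
    have hκ' := (hκD t).hasDerivAt.ofReal_comp
    exact HasDerivAt.const_mul Complex.I ((hα'.add hδ').add hκ')
  have hexp := hphase.cexp
  -- time derivative of the χ factor
  have hlin : HasDerivAt (fun s => β s * x + ε s) (deriv β t * x + deriv ε t) t :=
    ((hβD t).hasDerivAt.mul_const x).add (hεD t).hasDerivAt
  have hG := chainHD hFc hlin (hγD t).hasDerivAt
  -- total time derivative of ψ x ·
  have hfe : (fun s => ψ x s) = (fun s => ((Real.sqrt (μ s) : ℂ))⁻¹
      * Complex.exp (Complex.I * ((α s : ℂ) * (x : ℂ) ^ 2 + (δ s : ℂ) * (x : ℂ) + (κ s : ℂ)))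
      * Function.uncurry χ (β s * x + ε s, γ s)) := funext fun s => hψ x s
  have hψt := (hMD.mul hexp).mul hG
  simp only [Pi.mul_def] at hψt
  rw [← hfe] at hψt
  -- space derivative of ψ · t at every point y
  have hid : ∀ y : ℝ, HasDerivAt (fun u : ℝ => ((u : ℝ) : ℂ)) 1 y := fun y => by
    simpa using (hasDerivAt_id y).ofReal_comp
  have hph : ∀ y : ℝ, HasDerivAt
      (fun u : ℝ => Complex.I * ((α t : ℂ) * (u : ℂ) ^ 2 + (δ t : ℂ) * (u : ℂ) + (κ t : ℂ)))
      (Complex.I * (2 * (α t : ℂ) * (y : ℂ) + (δ t : ℂ))) y := fun y => by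
    have hsq2 : HasDerivAt (fun u : ℝ => ((u : ℝ) : ℂ) ^ 2) ((y : ℂ) + (y : ℂ)) y := by
      have h := (hid y).mul (hid y)
      simp only [← pow_two] at h
      exact h.congr_deriv (by ring)
    have h := HasDerivAt.const_mul Complex.I
      (((HasDerivAt.const_mul ((α t : ℂ)) hsq2).add
        (HasDerivAt.const_mul ((δ t : ℂ)) (hid y))).add_const ((κ t : ℂ)))
    refine h.congr_deriv ?_
    push_cast
    ring
  have hlin' : ∀ y : ℝ, HasDerivAt (fun u : ℝ => β t * u + ε t) (β t) y := fun y => by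
    simpa using ((hasDerivAt_id y).const_mul (β t)).add_const (ε t)
  have hGF : ∀ y : ℝ, HasDerivAt (fun u : ℝ => Function.uncurry χ (β t * u + ε t, γ t))
      ((β t : ℂ) * fderiv ℝ (Function.uncurry χ) (β t * y + ε t, γ t) (1, 0)) y := fun y => by
    simpa using chainHD hFc (hlin' y) (hasDerivAt_const y (γ t))
  have hXder : ∀ y : ℝ, HasDerivAt (fun u => ψ u t)
      (((Real.sqrt (μ t) : ℂ))⁻¹
          * (Complex.exp (Complex.I * ((α t : ℂ) * (y : ℂ) ^ 2 + (δ t : ℂ) * (y : ℂ) + (κ t : ℂ)))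
            * (Complex.I * (2 * (α t : ℂ) * (y : ℂ) + (δ t : ℂ))))
          * Function.uncurry χ (β t * y + ε t, γ t)
        + ((Real.sqrt (μ t) : ℂ))⁻¹
          * Complex.exp (Complex.I * ((α t : ℂ) * (y : ℂ) ^ 2 + (δ t : ℂ) * (y : ℂ) + (κ t : ℂ)))
          * ((β t : ℂ) * fderiv ℝ (Function.uncurry χ) (β t * y + ε t, γ t) (1, 0))) y := fun y => by
    have htot := (HasDerivAt.const_mul (((Real.sqrt (μ t) : ℂ))⁻¹) ((hph y).cexp)).mul (hGF y)
    rw [show (fun u => ψ u t) = (fun u : ℝ => ((Real.sqrt (μ t) : ℂ))⁻¹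
        * Complex.exp (Complex.I * ((α t : ℂ) * (u : ℂ) ^ 2 + (δ t : ℂ) * (u : ℂ) + (κ t : ℂ)))
        * Function.uncurry χ (β t * u + ε t, γ t)) from funext fun u => hψ u t]
    exact htot
  have hderivψx : deriv (fun u => ψ u t) = (fun y : ℝ =>
      ((Real.sqrt (μ t) : ℂ))⁻¹
          * (Complex.exp (Complex.I * ((α t : ℂ) * (y : ℂ) ^ 2 + (δ t : ℂ) * (y : ℂ) + (κ t : ℂ)))
            * (Complex.I * (2 * (α t : ℂ) * (y : ℂ) + (δ t : ℂ))))
          * Function.uncurry χ (β t * y + ε t, γ t)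
        + ((Real.sqrt (μ t) : ℂ))⁻¹
          * Complex.exp (Complex.I * ((α t : ℂ) * (y : ℂ) ^ 2 + (δ t : ℂ) * (y : ℂ) + (κ t : ℂ)))
          * ((β t : ℂ) * fderiv ℝ (Function.uncurry χ) (β t * y + ε t, γ t) (1, 0))) :=
    funext fun y => (hXder y).deriv
  -- second space derivative
  have hphd : HasDerivAt (fun y : ℝ => Complex.I * (2 * (α t : ℂ) * (y : ℂ) + (δ t : ℂ)))
      (Complex.I * (2 * (α t : ℂ))) x := by
    have h := HasDerivAt.const_mul Complex.I
      ((HasDerivAt.const_mul (2 * (α t : ℂ)) (hid x)).add_const ((δ t : ℂ)))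
    refine h.congr_deriv ?_
    ring
  have hGF1 : HasDerivAt
      (fun y : ℝ => fderiv ℝ (Function.uncurry χ) (β t * y + ε t, γ t) (1, 0))
      ((β t : ℂ) * fderiv ℝ (fun p => fderiv ℝ (Function.uncurry χ) p (1, 0))
          (β t * x + ε t, γ t) (1, 0)) x := by
    simpa using chainHD hF1c (hlin' x) (hasDerivAt_const x (γ t))
  have hsum := ((HasDerivAt.const_mul (((Real.sqrt (μ t) : ℂ))⁻¹)
        (((hph x).cexp).mul hphd)).mul (hGF x)).add
      ((HasDerivAt.const_mul (((Real.sqrt (μ t) : ℂ))⁻¹) ((hph x).cexp)).mul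
        (HasDerivAt.const_mul ((β t : ℂ)) hGF1))
  have hψxx : deriv (deriv (fun u => ψ u t)) x =
      ((Real.sqrt (μ t) : ℂ))⁻¹
          * (Complex.exp (Complex.I * ((α t : ℂ) * (x : ℂ) ^ 2 + (δ t : ℂ) * (x : ℂ) + (κ t : ℂ)))
                * (Complex.I * (2 * (α t : ℂ) * (x : ℂ) + (δ t : ℂ)))
                * (Complex.I * (2 * (α t : ℂ) * (x : ℂ) + (δ t : ℂ)))
              + Complex.exp (Complex.I * ((α t : ℂ) * (x : ℂ) ^ 2 + (δ t : ℂ) * (x : ℂ) + (κ t : ℂ)))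
                * (Complex.I * (2 * (α t : ℂ))))
          * Function.uncurry χ (β t * x + ε t, γ t)
        + ((Real.sqrt (μ t) : ℂ))⁻¹
          * (Complex.exp (Complex.I * ((α t : ℂ) * (x : ℂ) ^ 2 + (δ t : ℂ) * (x : ℂ) + (κ t : ℂ)))
              * (Complex.I * (2 * (α t : ℂ) * (x : ℂ) + (δ t : ℂ))))
          * ((β t : ℂ) * fderiv ℝ (Function.uncurry χ) (β t * x + ε t, γ t) (1, 0))
        + (((Real.sqrt (μ t) : ℂ))⁻¹
            * (Complex.exp (Complex.I * ((α t : ℂ) * (x : ℂ) ^ 2 + (δ t : ℂ) * (x : ℂ) + (κ t : ℂ)))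
                * (Complex.I * (2 * (α t : ℂ) * (x : ℂ) + (δ t : ℂ))))
            * ((β t : ℂ) * fderiv ℝ (Function.uncurry χ) (β t * x + ε t, γ t) (1, 0))
          + ((Real.sqrt (μ t) : ℂ))⁻¹
            * Complex.exp (Complex.I * ((α t : ℂ) * (x : ℂ) ^ 2 + (δ t : ℂ) * (x : ℂ) + (κ t : ℂ)))
            * ((β t : ℂ) * ((β t : ℂ) * fderiv ℝ (fun p => fderiv ℝ (Function.uncurry χ) p (1, 0))
                  (β t * x + ε t, γ t) (1, 0)))) := by
    rw [hderivψx]; exact hsum.deriv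
  -- the autonomous equation in fderiv form
  have hC2 : fderiv ℝ (Function.uncurry χ) (β t * x + ε t, γ t) (0, 1)
      = Complex.I * (-(fderiv ℝ (fun p => fderiv ℝ (Function.uncurry χ) p (1, 0))
            (β t * x + ε t, γ t) (1, 0))
          + (c₀ : ℂ) * ((β t : ℂ) * (x : ℂ) + (ε t : ℂ)) ^ 2
            * Function.uncurry χ (β t * x + ε t, γ t)) := by
    have h := hauto (β t * x + ε t) (γ t)
    rw [derivt_eq hχ, derivxx_eq hχ] at h
    have h2 := congrArg (fun z => Complex.I * z) h
    rw [show Complex.I * (-Complex.I * fderiv ℝ (Function.uncurry χ) (β t * x + ε t, γ t) (0, 1))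
        = fderiv ℝ (Function.uncurry χ) (β t * x + ε t, γ t) (0, 1) from by
      rw [← mul_assoc]; simp] at h2
    rw [h2]
    push_cast
    have : χ (β t * x + ε t) (γ t) = Function.uncurry χ (β t * x + ε t, γ t) := rfl
    rw [this]
  -- real system relations, coerced to ℂ
  have eα : ((deriv α t : ℝ) : ℂ) = (c₀ : ℂ) * (a t : ℂ) * (β t : ℂ) ^ 4 - (b t : ℂ)
      - 2 * (c t : ℂ) * (α t : ℂ) - 4 * (a t : ℂ) * (α t : ℂ) ^ 2 := by
    exact_mod_cast congrArg (Complex.ofReal)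
      (by linarith [hSysA t] : deriv α t = c₀ * a t * (β t) ^ 4 - b t - 2 * c t * α t
        - 4 * a t * (α t) ^ 2)
  have eβ : ((deriv β t : ℝ) : ℂ) = -((c t : ℂ) + 4 * (a t : ℂ) * (α t : ℂ)) * (β t : ℂ) := by
    exact_mod_cast congrArg (Complex.ofReal)
      (by linear_combination hSysB t : deriv β t = -(c t + 4 * a t * α t) * β t)
  have eγ : ((deriv γ t : ℝ) : ℂ) = -((a t : ℂ) * (β t : ℂ) ^ 2) := by
    exact_mod_cast congrArg (Complex.ofReal)
      (by linarith [hSysC t] : deriv γ t = -(a t * (β t) ^ 2))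
  have eδ : ((deriv δ t : ℝ) : ℂ) = (f t : ℂ) + 2 * (g t : ℂ) * (α t : ℂ)
      + 2 * (c₀ : ℂ) * (a t : ℂ) * (β t : ℂ) ^ 3 * (ε t : ℂ)
      - ((c t : ℂ) + 4 * (a t : ℂ) * (α t : ℂ)) * (δ t : ℂ) := by
    exact_mod_cast congrArg (Complex.ofReal)
      (by linarith [hSysD t] : deriv δ t = f t + 2 * g t * α t
        + 2 * c₀ * a t * (β t) ^ 3 * ε t - (c t + 4 * a t * α t) * δ t)
  have eε : ((deriv ε t : ℝ) : ℂ) = ((g t : ℂ) - 2 * (a t : ℂ) * (δ t : ℂ)) * (β t : ℂ) := by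
    exact_mod_cast congrArg (Complex.ofReal) (hSysE t)
  have eκ : ((deriv κ t : ℝ) : ℂ) = (g t : ℂ) * (δ t : ℂ) - (a t : ℂ) * (δ t : ℂ) ^ 2
      + (c₀ : ℂ) * (a t : ℂ) * (β t : ℂ) ^ 2 * (ε t : ℂ) ^ 2 := by
    exact_mod_cast congrArg (Complex.ofReal) (hSysF t)
  -- assemble
  rw [hψxx, hψt.deriv, (hXder x).deriv, hψ x t]
  push_cast
  rw [eα, eβ, eγ, eδ, eε, eκ, hC2]
  have huc : χ (β t * x + ε t) (γ t) = Function.uncurry χ (β t * x + ε t, γ t) := rfl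
  rw [huc]
  ring_nf
  simp only [Complex.I_sq]
  ring_nf
end

section
/- Let P(t) = (λ(t)/β(t))(p − 2α(t)x − δ(t)) and Q(t) = λ(t)(β(t)x + ε(t)) where λ(t) = exp(−∫₀ᵗ (c(s) − 2d(s)) ds), and where α, β, δ, ε satisfy the Ermakov-type system (equations (SysA)–(SysE) with parameter c₀) and the Hamiltonian is H = a p² + b x² + (c/2)(px + xp) + (i/2)(c − 2d) − f x − g p. Then the Heisenberg-type derivatives satisfy dP/dt = −2c₀aβ²Q and dQ/dt = 2aβ²P, where dA/dt := ∂A/∂t + i^{-1}(AH − H†A). -/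
open Complex intervalIntegral ContDiff

/-- Momentum operator `p = -i d/dx`. -/
noncomputable def momOp (ψ : ℝ → ℂ) : ℝ → ℂ := fun x => -Complex.I * deriv ψ x

/-- The Hamiltonian `H = a p² + b x² + (c/2)(px + xp) + (i/2)(c − 2d) − f x − g p`
at time `t`. -/
noncomputable def Ham (a b c d f g : ℝ → ℝ) (t : ℝ) (ψ : ℝ → ℂ) : ℝ → ℂ := fun x =>
  (a t : ℂ) * momOp (momOp ψ) x + (b t : ℂ) * (x : ℂ) ^ 2 * ψ x
    + (c t / 2 : ℂ) * (momOp (fun u => (u : ℂ) * ψ u) x + (x : ℂ) * momOp ψ x)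
    + Complex.I / 2 * ((c t : ℂ) - 2 * (d t : ℂ)) * ψ x
    - (f t : ℂ) * (x : ℂ) * ψ x - (g t : ℂ) * momOp ψ x

/-- The formal adjoint `H†` of the Hamiltonian. -/
noncomputable def HamAdj (a b c d f g : ℝ → ℝ) (t : ℝ) (ψ : ℝ → ℂ) : ℝ → ℂ := fun x =>
  (a t : ℂ) * momOp (momOp ψ) x + (b t : ℂ) * (x : ℂ) ^ 2 * ψ x
    + (c t / 2 : ℂ) * (momOp (fun u => (u : ℂ) * ψ u) x + (x : ℂ) * momOp ψ x)
    - Complex.I / 2 * ((c t : ℂ) - 2 * (d t : ℂ)) * ψ x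
    - (f t : ℂ) * (x : ℂ) * ψ x - (g t : ℂ) * momOp ψ x

/-- `λ(t) = exp(−∫₀ᵗ (c − 2d))`. -/
noncomputable def lamF (c d : ℝ → ℝ) (t : ℝ) : ℝ :=
  Real.exp (-∫ s in (0:ℝ)..t, (c s - 2 * d s))

/-- `P(t) = (λ/β)(p − 2αx − δ)`. -/
noncomputable def Pop (c d α β δ : ℝ → ℝ) (t : ℝ) (ψ : ℝ → ℂ) : ℝ → ℂ := fun x =>
  (lamF c d t / β t : ℂ) * (momOp ψ x - 2 * α t * x * ψ x - δ t * ψ x)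

/-- `Q(t) = λ(βx + ε)`. -/
noncomputable def Qop (c d β ε : ℝ → ℝ) (t : ℝ) (ψ : ℝ → ℂ) : ℝ → ℂ := fun x =>
  (lamF c d t : ℂ) * ((β t : ℂ) * x + ε t) * ψ x

lemma hasDerivAt_coeC (x : ℝ) : HasDerivAt (fun u : ℝ => (u : ℂ)) 1 x := by
  simpa using (hasDerivAt_id x).ofReal_comp

lemma hasDerivAt_pm (k0 k1 k2 : ℂ) (u : ℝ → ℂ) {x : ℝ} (hu : DifferentiableAt ℝ u x) :
    HasDerivAt (fun y : ℝ => (k0 + k1 * y + k2 * (y:ℂ)^2) * u y)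
      ((k1 + 2 * k2 * x) * u x + (k0 + k1 * x + k2 * (x:ℂ)^2) * deriv u x) x := by
  have h1 := hasDerivAt_coeC x
  have ha : HasDerivAt (fun y : ℝ => k1 * (y:ℂ)) (k1 * 1) x := h1.const_mul k1
  have hc : HasDerivAt (fun y : ℝ => k2 * (y:ℂ)^2) (k2 * (2 * x)) x := by
    have hh : HasDerivAt (fun y : ℝ => k2 * ((y:ℂ) * (y:ℂ))) (k2 * (1 * x + x * 1)) x :=
      (h1.mul h1).const_mul k2
    convert hh using 1
    · funext y; ring
    · push_cast; ring
  have hp : HasDerivAt (fun y : ℝ => (k0 + k1 * (y:ℂ) + k2 * (y:ℂ)^2)) (k1 + 2 * k2 * x) x := by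
    have h : HasDerivAt (fun y : ℝ => k0 + (k1 * (y:ℂ) + k2 * (y:ℂ)^2)) (k1 * 1 + k2 * (2 * x)) x :=
      (ha.add hc).const_add k0
    convert h using 1
    · funext y; ring
    · ring
  exact hp.mul hu.hasDerivAt

lemma momOp_momOp (φ : ℝ → ℂ) (hφ : Differentiable ℝ (deriv φ)) (x : ℝ) :
    momOp (momOp φ) x = -(deriv (deriv φ) x) := by
  have h : deriv (fun y => -Complex.I * deriv φ y) x = -Complex.I * deriv (deriv φ) x :=
    deriv_const_mul _ (hφ x)
  simp only [momOp]
  rw [show momOp φ = fun y => -Complex.I * deriv φ y from rfl, h]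
  linear_combination (deriv (deriv φ) x) * Complex.I_sq

lemma momOp_mul (φ : ℝ → ℂ) (hφ : Differentiable ℝ φ) (x : ℝ) :
    momOp (fun u => (u:ℂ) * φ u) x = -Complex.I * (φ x + x * deriv φ x) := by
  have h : deriv (fun u : ℝ => (u:ℂ) * φ u) x = 1 * φ x + x * deriv φ x :=
    ((hasDerivAt_coeC x).mul (hφ x).hasDerivAt).deriv
  simp only [momOp, h]
  ring

lemma ham_eq (a b c d f g : ℝ → ℝ) (t : ℝ) (φ : ℝ → ℂ)
    (h1 : Differentiable ℝ φ) (h2 : Differentiable ℝ (deriv φ)) (x : ℝ) :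
    Ham a b c d f g t φ x
      = -(a t : ℂ) * deriv (deriv φ) x + (b t : ℂ) * (x:ℂ)^2 * φ x
        - Complex.I * (c t : ℂ) * (x:ℂ) * deriv φ x - Complex.I * (d t : ℂ) * φ x
        - (f t : ℂ) * (x:ℂ) * φ x + Complex.I * (g t : ℂ) * deriv φ x := by
  rw [Ham, momOp_momOp φ h2 x, momOp_mul φ h1 x]
  simp only [momOp]
  ring

lemma hamAdj_eq (a b c d f g : ℝ → ℝ) (t : ℝ) (φ : ℝ → ℂ)
    (h1 : Differentiable ℝ φ) (h2 : Differentiable ℝ (deriv φ)) (x : ℝ) :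
    HamAdj a b c d f g t φ x
      = -(a t : ℂ) * deriv (deriv φ) x + (b t : ℂ) * (x:ℂ)^2 * φ x
        - Complex.I * (c t : ℂ) * (x:ℂ) * deriv φ x
        - Complex.I * (c t : ℂ) * φ x + Complex.I * (d t : ℂ) * φ x
        - (f t : ℂ) * (x:ℂ) * φ x + Complex.I * (g t : ℂ) * deriv φ x := by
  rw [HamAdj, momOp_momOp φ h2 x, momOp_mul φ h1 x]
  simp only [momOp]
  ring

set_option maxHeartbeats 4000000 in
/-- with `dA/dt := ∂A/∂t + i⁻¹(AH − H†A)`, one has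
`dP/dt = −2c₀aβ²Q` and `dQ/dt = 2aβ²P`. -/
theorem PQ_heisenberg_derivatives
    (a b c d f g : ℝ → ℝ) (c₀ : ℝ) (hc₀ : c₀ = 0 ∨ c₀ = 1)
    (ha : ∀ t, a t ≠ 0)
    (α β δ ε : ℝ → ℝ) (hβ : ∀ t, β t ≠ 0)
    (haD : Differentiable ℝ a) (hcD : Continuous c) (hdD : Continuous d)
    (hαD : Differentiable ℝ α) (hβD : Differentiable ℝ β)
    (hδD : Differentiable ℝ δ) (hεD : Differentiable ℝ ε)
    (hSysA : ∀ t, deriv α t + b t + 2 * c t * α t + 4 * a t * (α t) ^ 2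
        = c₀ * a t * (β t) ^ 4)
    (hSysB : ∀ t, deriv β t + (c t + 4 * a t * α t) * β t = 0)
    (hSysD : ∀ t, deriv δ t + (c t + 4 * a t * α t) * δ t
        = f t + 2 * g t * α t + 2 * c₀ * a t * (β t) ^ 3 * ε t)
    (hSysE : ∀ t, deriv ε t = (g t - 2 * a t * δ t) * β t)
    (ψ : ℝ → ℂ) (hψ : ContDiff ℝ (⊤ : ℕ∞) ψ) (t x : ℝ) :
    (deriv (fun s => Pop c d α β δ s ψ x) t
        + Complex.I⁻¹ * (Pop c d α β δ t (Ham a b c d f g t ψ) x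
            - HamAdj a b c d f g t (Pop c d α β δ t ψ) x)
      = -2 * c₀ * a t * (β t) ^ 2 * Qop c d β ε t ψ x)
    ∧
    (deriv (fun s => Qop c d β ε s ψ x) t
        + Complex.I⁻¹ * (Qop c d β ε t (Ham a b c d f g t ψ) x
            - HamAdj a b c d f g t (Qop c d β ε t ψ) x)
      = 2 * a t * (β t) ^ 2 * Pop c d α β δ t ψ x) := by
  -- smoothness chain
  have hc0 : ContDiff ℝ ∞ ψ := hψ.of_le (by simp)
  have h0 : Differentiable ℝ ψ := (contDiff_infty_iff_deriv.mp hc0).1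
  have hc1 : ContDiff ℝ ∞ (deriv ψ) := (contDiff_infty_iff_deriv.mp hc0).2
  have h1 : Differentiable ℝ (deriv ψ) := (contDiff_infty_iff_deriv.mp hc1).1
  have hc2 : ContDiff ℝ ∞ (deriv (deriv ψ)) := (contDiff_infty_iff_deriv.mp hc1).2
  have h2 : Differentiable ℝ (deriv (deriv ψ)) := (contDiff_infty_iff_deriv.mp hc2).1
  -- derivative of λ
  have hlam : HasDerivAt (lamF c d) (-(c t - 2 * d t) * lamF c d t) t := by
    have hcont : Continuous (fun s => c s - 2 * d s) := hcD.sub (continuous_const.mul hdD)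
    have hi : HasDerivAt (fun s => ∫ u in (0:ℝ)..s, (c u - 2 * d u)) (c t - 2 * d t) t :=
      (hcont.integral_hasStrictDerivAt 0 t).hasDerivAt
    have h : HasDerivAt (lamF c d)
        (Real.exp (-∫ u in (0:ℝ)..t, (c u - 2 * d u)) * -(c t - 2 * d t)) t := hi.neg.exp
    exact h.congr_deriv (by simp only [lamF]; ring)
  have hβC : ((β t : ℝ) : ℂ) ≠ 0 := Complex.ofReal_ne_zero.mpr (hβ t)
  -- system equations rearranged
  have eα : deriv α t = c₀ * a t * β t ^ 4 - b t - 2 * c t * α t - 4 * a t * α t ^ 2 := by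
    have := hSysA t; linarith
  have eβ : deriv β t = -((c t + 4 * a t * α t) * β t) := by
    have := hSysB t; linarith
  have eδ : deriv δ t = f t + 2 * g t * α t + 2 * c₀ * a t * β t ^ 3 * ε t
      - (c t + 4 * a t * α t) * δ t := by
    have := hSysD t; linarith
  have eε := hSysE t
  -- I-power facts
  have hI2 : (Complex.I : ℂ) ^ 2 = -1 := Complex.I_sq
  have hI3 : (Complex.I : ℂ) ^ 3 = -Complex.I := by
    rw [pow_succ, hI2]; ring
  -- Ham as explicit function
  have hHfun : Ham a b c d f g t ψ = fun y : ℝ =>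
      ((-(Complex.I * (d t : ℂ))) + (-(f t : ℂ)) * y + (b t : ℂ) * (y:ℂ)^2) * ψ y
      + ((Complex.I * (g t : ℂ)) + (-(Complex.I * (c t : ℂ))) * y + 0 * (y:ℂ)^2) * deriv ψ y
      + ((-(a t : ℂ)) + 0 * y + 0 * (y:ℂ)^2) * deriv (deriv ψ) y := by
    funext y
    rw [ham_eq a b c d f g t ψ h0 h1 y]
    push_cast
    ring
  have hHd : deriv (Ham a b c d f g t ψ) x
      = -(a t : ℂ) * deriv (deriv (deriv ψ)) x
        + (b t : ℂ) * (2 * (x:ℂ) * ψ x + (x:ℂ)^2 * deriv ψ x)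
        - Complex.I * (c t : ℂ) * (deriv ψ x + (x:ℂ) * deriv (deriv ψ) x)
        - Complex.I * (d t : ℂ) * deriv ψ x
        - (f t : ℂ) * (ψ x + (x:ℂ) * deriv ψ x)
        + Complex.I * (g t : ℂ) * deriv (deriv ψ) x := by
    rw [hHfun]
    exact (((hasDerivAt_pm _ _ _ ψ (h0 x)).add
        (hasDerivAt_pm _ _ _ (deriv ψ) (h1 x))).add
        (hasDerivAt_pm _ _ _ (deriv (deriv ψ)) (h2 x))).deriv.trans (by push_cast; ring)
  ------------------------------------------------------------------
  -- Part P
  ------------------------------------------------------------------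
  have ePop : (fun s => Pop c d α β δ s ψ x)
      = fun s => (lamF c d s : ℂ) / (β s : ℂ)
          * (momOp ψ x - 2 * (α s : ℂ) * (x:ℂ) * ψ x - (δ s : ℂ) * ψ x) := by
    funext s; simp only [Pop]
  have hKt : HasDerivAt (fun s => (lamF c d s : ℂ) / (β s : ℂ))
      ((((-(c t - 2 * d t) * lamF c d t : ℝ) : ℂ) * (β t : ℂ)
          - (lamF c d t : ℂ) * ((deriv β t : ℝ) : ℂ)) / ((β t : ℂ))^2) t :=
    (hlam.ofReal_comp).div ((hβD t).hasDerivAt.ofReal_comp) hβC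
  have hIn : HasDerivAt
      (fun s => momOp ψ x - 2 * (α s : ℂ) * (x:ℂ) * ψ x - (δ s : ℂ) * ψ x)
      (0 - 2 * ((deriv α t : ℝ) : ℂ) * (x:ℂ) * ψ x - ((deriv δ t : ℝ) : ℂ) * ψ x) t := by
    have t1 := (((hαD t).hasDerivAt.ofReal_comp.const_mul (2:ℂ)).mul_const
      ((x:ℂ))).mul_const (ψ x)
    have t2 := (hδD t).hasDerivAt.ofReal_comp.mul_const (ψ x)
    exact ((hasDerivAt_const t (momOp ψ x)).sub t1).sub t2
  have hPt := hKt.mul hIn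
  have hPtv : deriv (fun s => Pop c d α β δ s ψ x) t
      = ((-((c t : ℂ) - 2 * (d t : ℂ)) * (lamF c d t : ℂ) * (β t : ℂ)
            - (lamF c d t : ℂ) * ((deriv β t : ℝ) : ℂ)) / ((β t : ℂ))^2)
          * (momOp ψ x - 2 * (α t : ℂ) * (x:ℂ) * ψ x - (δ t : ℂ) * ψ x)
        + ((lamF c d t : ℂ) / (β t : ℂ))
          * (-(2 * ((deriv α t : ℝ) : ℂ) * (x:ℂ) * ψ x) - ((deriv δ t : ℝ) : ℂ) * ψ x) := by
    rw [ePop]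
    exact hPt.deriv.trans (by push_cast; ring)
  have hPtv2 : deriv (fun s => Pop c d α β δ s ψ x) t
      = (2 * (d t : ℂ) + 4 * (a t : ℂ) * (α t : ℂ)) * ((lamF c d t : ℂ) / (β t : ℂ))
          * (momOp ψ x - 2 * (α t : ℂ) * (x:ℂ) * ψ x - (δ t : ℂ) * ψ x)
        + ((lamF c d t : ℂ) / (β t : ℂ))
          * (-(2 * ((deriv α t : ℝ) : ℂ) * (x:ℂ) * ψ x) - ((deriv δ t : ℝ) : ℂ) * ψ x) := by
    rw [hPtv, eβ]
    push_cast
    field_simp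
    ring
  -- Pψ as explicit function
  have hPfun : Pop c d α β δ t ψ = fun y : ℝ =>
      ((-((lamF c d t : ℂ) / (β t : ℂ) * (δ t : ℂ)))
          + (-(2 * ((lamF c d t : ℂ) / (β t : ℂ)) * (α t : ℂ))) * y + 0 * (y:ℂ)^2) * ψ y
      + ((-(Complex.I * ((lamF c d t : ℂ) / (β t : ℂ)))) + 0 * y + 0 * (y:ℂ)^2)
          * deriv ψ y := by
    funext y
    simp only [Pop, momOp]
    ring
  have hPdiff : Differentiable ℝ (Pop c d α β δ t ψ) := by
    rw [hPfun]
    exact fun y => ((hasDerivAt_pm _ _ _ ψ (h0 y)).add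
      (hasDerivAt_pm _ _ _ (deriv ψ) (h1 y))).differentiableAt
  have hP1fun : deriv (Pop c d α β δ t ψ) = fun y : ℝ =>
      ((-(2 * ((lamF c d t : ℂ) / (β t : ℂ)) * (α t : ℂ))) + 0 * y + 0 * (y:ℂ)^2) * ψ y
      + ((-((lamF c d t : ℂ) / (β t : ℂ) * (δ t : ℂ)))
          + (-(2 * ((lamF c d t : ℂ) / (β t : ℂ)) * (α t : ℂ))) * y + 0 * (y:ℂ)^2) * deriv ψ y
      + ((-(Complex.I * ((lamF c d t : ℂ) / (β t : ℂ)))) + 0 * y + 0 * (y:ℂ)^2)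
          * deriv (deriv ψ) y := by
    funext y
    rw [hPfun]
    exact ((hasDerivAt_pm _ _ _ ψ (h0 y)).add
      (hasDerivAt_pm _ _ _ (deriv ψ) (h1 y))).deriv.trans (by push_cast; ring)
  have hP1diff : Differentiable ℝ (deriv (Pop c d α β δ t ψ)) := by
    rw [hP1fun]
    exact fun y => (((hasDerivAt_pm _ _ _ ψ (h0 y)).add
      (hasDerivAt_pm _ _ _ (deriv ψ) (h1 y))).add
      (hasDerivAt_pm _ _ _ (deriv (deriv ψ)) (h2 y))).differentiableAt
  have hP1x : deriv (Pop c d α β δ t ψ) x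
      = (-(2 * ((lamF c d t : ℂ) / (β t : ℂ)) * (α t : ℂ))) * ψ x
        + ((-((lamF c d t : ℂ) / (β t : ℂ) * (δ t : ℂ)))
            + (-(2 * ((lamF c d t : ℂ) / (β t : ℂ)) * (α t : ℂ))) * (x:ℂ)) * deriv ψ x
        + (-(Complex.I * ((lamF c d t : ℂ) / (β t : ℂ)))) * deriv (deriv ψ) x := by
    rw [hP1fun]; push_cast; ring
  have hP2x : deriv (deriv (Pop c d α β δ t ψ)) x
      = (-(4 * ((lamF c d t : ℂ) / (β t : ℂ)) * (α t : ℂ))) * deriv ψ x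
        + ((-((lamF c d t : ℂ) / (β t : ℂ) * (δ t : ℂ)))
            + (-(2 * ((lamF c d t : ℂ) / (β t : ℂ)) * (α t : ℂ))) * (x:ℂ)) * deriv (deriv ψ) x
        + (-(Complex.I * ((lamF c d t : ℂ) / (β t : ℂ)))) * deriv (deriv (deriv ψ)) x := by
    rw [hP1fun]
    exact (((hasDerivAt_pm _ _ _ ψ (h0 x)).add
      (hasDerivAt_pm _ _ _ (deriv ψ) (h1 x))).add
      (hasDerivAt_pm _ _ _ (deriv (deriv ψ)) (h2 x))).deriv.trans (by push_cast; ring)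
  ------------------------------------------------------------------
  -- Part Q
  ------------------------------------------------------------------
  have eQop : (fun s => Qop c d β ε s ψ x)
      = fun s => (lamF c d s : ℂ) * ((β s : ℂ) * (x:ℂ) + (ε s : ℂ)) * ψ x := by
    funext s; simp only [Qop]
  have hQt := ((hlam.ofReal_comp.mul
      (((hβD t).hasDerivAt.ofReal_comp.mul_const ((x:ℂ))).add
        (hεD t).hasDerivAt.ofReal_comp))).mul_const (ψ x)
  have hQtv : deriv (fun s => Qop c d β ε s ψ x) t
      = ((-((c t : ℂ) - 2 * (d t : ℂ)) * (lamF c d t : ℂ)) * ((β t : ℂ) * (x:ℂ) + (ε t : ℂ))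
          + (lamF c d t : ℂ) * (((deriv β t : ℝ) : ℂ) * (x:ℂ) + ((deriv ε t : ℝ) : ℂ)))
        * ψ x := by
    rw [eQop]
    exact hQt.deriv.trans (by simp only [Pi.add_apply]; push_cast; ring)
  have hQfun : Qop c d β ε t ψ = fun y : ℝ =>
      (((lamF c d t : ℂ) * (ε t : ℂ)) + ((lamF c d t : ℂ) * (β t : ℂ)) * y + 0 * (y:ℂ)^2)
        * ψ y := by
    funext y
    simp only [Qop]
    ring
  have hQdiff : Differentiable ℝ (Qop c d β ε t ψ) := by
    rw [hQfun]
    exact fun y => (hasDerivAt_pm _ _ _ ψ (h0 y)).differentiableAt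
  have hQ1fun : deriv (Qop c d β ε t ψ) = fun y : ℝ =>
      (((lamF c d t : ℂ) * (β t : ℂ)) + 0 * y + 0 * (y:ℂ)^2) * ψ y
      + (((lamF c d t : ℂ) * (ε t : ℂ)) + ((lamF c d t : ℂ) * (β t : ℂ)) * y + 0 * (y:ℂ)^2)
          * deriv ψ y := by
    funext y
    rw [hQfun]
    exact (hasDerivAt_pm _ _ _ ψ (h0 y)).deriv.trans (by push_cast; ring)
  have hQ1diff : Differentiable ℝ (deriv (Qop c d β ε t ψ)) := by
    rw [hQ1fun]
    exact fun y => ((hasDerivAt_pm _ _ _ ψ (h0 y)).add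
      (hasDerivAt_pm _ _ _ (deriv ψ) (h1 y))).differentiableAt
  have hQ1x : deriv (Qop c d β ε t ψ) x
      = ((lamF c d t : ℂ) * (β t : ℂ)) * ψ x
        + (((lamF c d t : ℂ) * (ε t : ℂ)) + ((lamF c d t : ℂ) * (β t : ℂ)) * (x:ℂ))
            * deriv ψ x := by
    rw [hQ1fun]; push_cast; ring
  have hQ2x : deriv (deriv (Qop c d β ε t ψ)) x
      = 2 * ((lamF c d t : ℂ) * (β t : ℂ)) * deriv ψ x
        + (((lamF c d t : ℂ) * (ε t : ℂ)) + ((lamF c d t : ℂ) * (β t : ℂ)) * (x:ℂ))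
            * deriv (deriv ψ) x := by
    rw [hQ1fun]
    exact ((hasDerivAt_pm _ _ _ ψ (h0 x)).add
      (hasDerivAt_pm _ _ _ (deriv ψ) (h1 x))).deriv.trans (by push_cast; ring)
  ------------------------------------------------------------------
  constructor
  · rw [hPtv2, Complex.inv_I,
      hamAdj_eq a b c d f g t (Pop c d α β δ t ψ) hPdiff hP1diff x, hP2x, hP1x]
    simp only [Pop, Qop, momOp]
    rw [hHd, ham_eq a b c d f g t ψ h0 h1 x]
    rw [eα, eδ]
    push_cast
    set K := (lamF c d t : ℂ) / (β t : ℂ) with hKdef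
    have hlamK : ((lamF c d t : ℝ) : ℂ) = K * ((β t : ℝ) : ℂ) := by
      rw [hKdef]; field_simp
    rw [hlamK]
    ring_nf
    simp only [hI2, hI3]
    ring
  · rw [hQtv, Complex.inv_I,
      hamAdj_eq a b c d f g t (Qop c d β ε t ψ) hQdiff hQ1diff x, hQ2x, hQ1x]
    simp only [Pop, Qop, momOp]
    rw [ham_eq a b c d f g t ψ h0 h1 x]
    rw [eβ, eε]
    push_cast
    set K := (lamF c d t : ℂ) / (β t : ℂ) with hKdef
    have hlamK : ((lamF c d t : ℝ) : ℂ) = K * ((β t : ℝ) : ℂ) := by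
      rw [hKdef]; field_simp
    rw [hlamK]
    ring_nf
    simp only [hI2, hI3]
    ring
end

section
/- With P, Q, λ as above satisfying dP/dt = −2c₀aβ²Q, dQ/dt = 2aβ²P, λ'/λ = −(c − 2d), and assuming λ'·(P² + c₀Q²) contributions cancel appropriately via the product rule d(AB)/dt = (dA/dt)B + A(dB/dt), the quadratic invariant E = (λ^{-1}/2)(P² + c₀Q²) satisfies dE/dt = 0, i.e., ∂E/∂t + i^{-1}(EH − H†E) = 0. -/
open Complex intervalIntegral

/-- The quadratic invariant `E = (λ⁻¹/2)(P² + c₀Q²)`. -/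
noncomputable def Einv (c d α β δ ε : ℝ → ℝ) (c₀ : ℝ) (t : ℝ) (ψ : ℝ → ℂ) :
    ℝ → ℂ := fun x =>
  ((lamF c d t)⁻¹ / 2 : ℂ) * (Pop c d α β δ t (Pop c d α β δ t ψ) x
    + c₀ * Qop c d β ε t (Qop c d β ε t ψ) x)

-- smoothness infrastructure
lemma smooth_deriv {ψ : ℝ → ℂ} (h : ContDiff ℝ (⊤ : ℕ∞) ψ) : ContDiff ℝ (⊤ : ℕ∞) (deriv ψ) := by
  have h' : ContDiff ℝ (((⊤ : ℕ∞) : WithTop ℕ∞) + 1) ψ := h.of_le (by exact_mod_cast le_top)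
  exact (contDiff_succ_iff_deriv.mp h').2.2

lemma smooth_diff {ψ : ℝ → ℂ} (h : ContDiff ℝ (⊤ : ℕ∞) ψ) : Differentiable ℝ ψ :=
  h.differentiable (by simp)

lemma smooth_ofReal : ContDiff ℝ (⊤ : ℕ∞) (fun u : ℝ => (u : ℂ)) := Complex.ofRealCLM.contDiff

lemma momOp_smooth {ψ : ℝ → ℂ} (h : ContDiff ℝ (⊤ : ℕ∞) ψ) : ContDiff ℝ (⊤ : ℕ∞) (momOp ψ) :=
  contDiff_const.mul (smooth_deriv h)

lemma xmul_smooth {ψ : ℝ → ℂ} (h : ContDiff ℝ (⊤ : ℕ∞) ψ) :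
    ContDiff ℝ (⊤ : ℕ∞) (fun u : ℝ => (u : ℂ) * ψ u) := smooth_ofReal.mul h

lemma Pop_smooth (c d α β δ : ℝ → ℝ) (t : ℝ) {ψ : ℝ → ℂ} (h : ContDiff ℝ (⊤ : ℕ∞) ψ) :
    ContDiff ℝ (⊤ : ℕ∞) (Pop c d α β δ t ψ) := by
  unfold Pop
  exact contDiff_const.mul (((momOp_smooth h).sub
    ((contDiff_const.mul smooth_ofReal).mul h)).sub (contDiff_const.mul h))

lemma Qop_smooth (c d β ε : ℝ → ℝ) (t : ℝ) {ψ : ℝ → ℂ} (h : ContDiff ℝ (⊤ : ℕ∞) ψ) :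
    ContDiff ℝ (⊤ : ℕ∞) (Qop c d β ε t ψ) := by
  unfold Qop
  exact (contDiff_const.mul ((contDiff_const.mul smooth_ofReal).add contDiff_const)).mul h

lemma HamAdj_smooth (a b c d f g : ℝ → ℝ) (t : ℝ) {ψ : ℝ → ℂ} (h : ContDiff ℝ (⊤ : ℕ∞) ψ) :
    ContDiff ℝ (⊤ : ℕ∞) (HamAdj a b c d f g t ψ) := by
  unfold HamAdj
  exact (((((contDiff_const.mul (momOp_smooth (momOp_smooth h))).add
    ((contDiff_const.mul (smooth_ofReal.pow 2)).mul h)).add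
    (contDiff_const.mul ((momOp_smooth (xmul_smooth h)).add
      (smooth_ofReal.mul (momOp_smooth h))))).sub
    (contDiff_const.mul h)).sub ((contDiff_const.mul smooth_ofReal).mul h)).sub
    (contDiff_const.mul (momOp_smooth h))
lemma deriv_comb3 {φ₁ φ₂ φ₃ : ℝ → ℂ} (h₁ : Differentiable ℝ φ₁) (h₂ : Differentiable ℝ φ₂)
    (h₃ : Differentiable ℝ φ₃) (μ₁ μ₂ μ₃ : ℂ) (x : ℝ) :
    deriv (fun u => μ₁ * φ₁ u + μ₂ * φ₂ u + μ₃ * φ₃ u) x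
      = μ₁ * deriv φ₁ x + μ₂ * deriv φ₂ x + μ₃ * deriv φ₃ x :=
  ((((h₁ x).hasDerivAt.const_mul μ₁).add ((h₂ x).hasDerivAt.const_mul μ₂)).add
    ((h₃ x).hasDerivAt.const_mul μ₃)).deriv

lemma momOp_comb3 {φ₁ φ₂ φ₃ : ℝ → ℂ} (h₁ : Differentiable ℝ φ₁) (h₂ : Differentiable ℝ φ₂)
    (h₃ : Differentiable ℝ φ₃) (μ₁ μ₂ μ₃ : ℂ) (x : ℝ) :
    momOp (fun u => μ₁ * φ₁ u + μ₂ * φ₂ u + μ₃ * φ₃ u) x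
      = μ₁ * momOp φ₁ x + μ₂ * momOp φ₂ x + μ₃ * momOp φ₃ x := by
  unfold momOp; rw [deriv_comb3 h₁ h₂ h₃]; ring

lemma Pop_comb3 (c d α β δ : ℝ → ℝ) (t : ℝ) {φ₁ φ₂ φ₃ : ℝ → ℂ}
    (h₁ : Differentiable ℝ φ₁) (h₂ : Differentiable ℝ φ₂)
    (h₃ : Differentiable ℝ φ₃) (μ₁ μ₂ μ₃ : ℂ) (x : ℝ) :
    Pop c d α β δ t (fun u => μ₁ * φ₁ u + μ₂ * φ₂ u + μ₃ * φ₃ u) x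
      = μ₁ * Pop c d α β δ t φ₁ x + μ₂ * Pop c d α β δ t φ₂ x
        + μ₃ * Pop c d α β δ t φ₃ x := by
  unfold Pop momOp; rw [deriv_comb3 h₁ h₂ h₃]; ring

lemma HamAdj_comb3 (a b c d f g : ℝ → ℝ) (t : ℝ) {φ₁ φ₂ φ₃ : ℝ → ℂ}
    (h₁ : ContDiff ℝ (⊤ : ℕ∞) φ₁) (h₂ : ContDiff ℝ (⊤ : ℕ∞) φ₂)
    (h₃ : ContDiff ℝ (⊤ : ℕ∞) φ₃) (μ₁ μ₂ μ₃ : ℂ) (x : ℝ) :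
    HamAdj a b c d f g t (fun u => μ₁ * φ₁ u + μ₂ * φ₂ u + μ₃ * φ₃ u) x
      = μ₁ * HamAdj a b c d f g t φ₁ x + μ₂ * HamAdj a b c d f g t φ₂ x
        + μ₃ * HamAdj a b c d f g t φ₃ x := by
  have e1 : momOp (fun u => μ₁ * φ₁ u + μ₂ * φ₂ u + μ₃ * φ₃ u)
      = fun u => μ₁ * momOp φ₁ u + μ₂ * momOp φ₂ u + μ₃ * momOp φ₃ u :=
    funext (momOp_comb3 (smooth_diff h₁) (smooth_diff h₂) (smooth_diff h₃) μ₁ μ₂ μ₃)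
  have e2 : momOp (momOp (fun u => μ₁ * φ₁ u + μ₂ * φ₂ u + μ₃ * φ₃ u)) x
      = μ₁ * momOp (momOp φ₁) x + μ₂ * momOp (momOp φ₂) x + μ₃ * momOp (momOp φ₃) x := by
    rw [e1]
    exact momOp_comb3 (smooth_diff (momOp_smooth h₁)) (smooth_diff (momOp_smooth h₂))
      (smooth_diff (momOp_smooth h₃)) μ₁ μ₂ μ₃ x
  have e3 : (fun u : ℝ => (u : ℂ) * (μ₁ * φ₁ u + μ₂ * φ₂ u + μ₃ * φ₃ u))
      = fun u : ℝ => μ₁ * ((u : ℂ) * φ₁ u) + μ₂ * ((u : ℂ) * φ₂ u) + μ₃ * ((u : ℂ) * φ₃ u) :=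
    funext fun u => by ring
  have e4 : momOp (fun u : ℝ => (u : ℂ) * (μ₁ * φ₁ u + μ₂ * φ₂ u + μ₃ * φ₃ u)) x
      = μ₁ * momOp (fun u : ℝ => (u : ℂ) * φ₁ u) x + μ₂ * momOp (fun u : ℝ => (u : ℂ) * φ₂ u) x
        + μ₃ * momOp (fun u : ℝ => (u : ℂ) * φ₃ u) x := by
    rw [e3]
    exact momOp_comb3 (smooth_diff (xmul_smooth h₁)) (smooth_diff (xmul_smooth h₂))
      (smooth_diff (xmul_smooth h₃)) μ₁ μ₂ μ₃ x
  have e5 := momOp_comb3 (smooth_diff h₁) (smooth_diff h₂) (smooth_diff h₃) μ₁ μ₂ μ₃ x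
  unfold HamAdj
  rw [e2, e4, e5]; ring

lemma Pop_shape (c d α β δ : ℝ → ℝ) (t : ℝ) (ψ : ℝ → ℂ) (x : ℝ) :
    Pop c d α β δ t ψ x
      = ((lamF c d t : ℂ) / (β t : ℂ)) * (-Complex.I * deriv ψ x)
        + (-(2 * (α t : ℂ)) * ((lamF c d t : ℂ) / (β t : ℂ))) * ((x : ℂ) * ψ x)
        + (-(δ t : ℂ) * ((lamF c d t : ℂ) / (β t : ℂ))) * ψ x := by
  unfold Pop momOp; ring

lemma shape_smooth {ψ : ℝ → ℂ} (hψ : ContDiff ℝ (⊤ : ℕ∞) ψ) (r s t : ℂ) :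
    ContDiff ℝ (⊤ : ℕ∞) (fun u : ℝ => r * (-Complex.I * deriv ψ u) + s * ((u : ℂ) * ψ u) + t * ψ u) :=
  ((contDiff_const.mul (contDiff_const.mul (smooth_deriv hψ))).add
    (contDiff_const.mul (smooth_ofReal.mul hψ))).add (contDiff_const.mul hψ)

lemma deriv_shape {ψ : ℝ → ℂ} (hψ : ContDiff ℝ (⊤ : ℕ∞) ψ) (r s t : ℂ) (x : ℝ) :
    deriv (fun u : ℝ => r * (-Complex.I * deriv ψ u) + s * ((u : ℂ) * ψ u) + t * ψ u) x
      = r * (-Complex.I * deriv (deriv ψ) x) + s * (ψ x + (x : ℂ) * deriv ψ x)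
        + t * deriv ψ x := by
  have h1 : HasDerivAt (fun u : ℝ => r * (-Complex.I * deriv ψ u))
      (r * (-Complex.I * deriv (deriv ψ) x)) x :=
    (((smooth_diff (smooth_deriv hψ)) x).hasDerivAt.const_mul (-Complex.I)).const_mul r
  have hx : HasDerivAt (fun u : ℝ => (u : ℂ)) 1 x := by
    simpa using (hasDerivAt_id x).ofReal_comp
  have h2 : HasDerivAt (fun u : ℝ => s * ((u : ℂ) * ψ u)) (s * (ψ x + (x : ℂ) * deriv ψ x)) x := by
    have := (hx.mul ((smooth_diff hψ) x).hasDerivAt).const_mul s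
    simpa [mul_comm, mul_assoc, mul_left_comm] using this
  have h3 : HasDerivAt (fun u : ℝ => t * ψ u) (t * deriv ψ x) x :=
    ((smooth_diff hψ) x).hasDerivAt.const_mul t
  exact ((h1.add h2).add h3).deriv

lemma deriv_Pop (c d α β δ : ℝ → ℝ) (t : ℝ) {ψ : ℝ → ℂ} (hψ : ContDiff ℝ (⊤ : ℕ∞) ψ) (x : ℝ) :
    deriv (Pop c d α β δ t ψ) x
      = ((lamF c d t : ℂ) / (β t : ℂ)) * (-Complex.I * deriv (deriv ψ) x)
        + (-(2 * (α t : ℂ)) * ((lamF c d t : ℂ) / (β t : ℂ))) * (ψ x + (x : ℂ) * deriv ψ x)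
        + (-(δ t : ℂ) * ((lamF c d t : ℂ) / (β t : ℂ))) * deriv ψ x := by
  have : Pop c d α β δ t ψ = fun u : ℝ =>
      ((lamF c d t : ℂ) / (β t : ℂ)) * (-Complex.I * deriv ψ u)
        + (-(2 * (α t : ℂ)) * ((lamF c d t : ℂ) / (β t : ℂ))) * ((u : ℂ) * ψ u)
        + (-(δ t : ℂ) * ((lamF c d t : ℂ) / (β t : ℂ))) * ψ u :=
    funext fun u => Pop_shape c d α β δ t ψ u
  rw [this, deriv_shape hψ]
lemma lamF_hasDeriv (c d : ℝ → ℝ) (hc : Continuous c) (hd : Continuous d) (t : ℝ) :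
    HasDerivAt (lamF c d) (-(c t - 2 * d t) * lamF c d t) t := by
  unfold lamF
  have h1 : HasDerivAt (fun s => ∫ u in (0:ℝ)..s, (c u - 2 * d u)) (c t - 2 * d t) t := by
    apply intervalIntegral.integral_hasDerivAt_right
    · exact (hc.sub (continuous_const.mul hd)).intervalIntegrable _ _
    · exact ((hc.sub (continuous_const.mul hd)).stronglyMeasurable).stronglyMeasurableAtFilter
    · exact (hc.sub (continuous_const.mul hd)).continuousAt
  simpa [mul_comm] using (h1.neg).exp

lemma lamF_pos (c d : ℝ → ℝ) (t : ℝ) : 0 < lamF c d t := Real.exp_pos _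

lemma Ham_eq_adj (a b c d f g : ℝ → ℝ) (t : ℝ) (ψ : ℝ → ℂ) (x : ℝ) :
    Ham a b c d f g t ψ x = HamAdj a b c d f g t ψ x
      + Complex.I * ((c t : ℂ) - 2 * (d t : ℂ)) * ψ x := by
  unfold Ham HamAdj; ring

lemma solve_inv_I {w x y z : ℂ} (h : w + Complex.I⁻¹ * (x - y) = z) :
    x = y + Complex.I * z - Complex.I * w := by
  rw [Complex.inv_I] at h
  linear_combination Complex.I * h + (x - y) * Complex.I_sq

/-- given the Heisenberg derivative relations `dP/dt = −2c₀aβ²Q` and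
`dQ/dt = 2aβ²P` and `λ'/λ = −(c − 2d)`, the quadratic invariant
`E = (λ⁻¹/2)(P² + c₀Q²)` satisfies `dE/dt = ∂E/∂t + i⁻¹(EH − H†E) = 0`. -/
theorem quadratic_invariant_conserved
    (a b c d f g : ℝ → ℝ) (c₀ : ℝ) (hc₀ : c₀ = 0 ∨ c₀ = 1)
    (ha : ∀ t, a t ≠ 0)
    (α β δ ε : ℝ → ℝ) (hβ : ∀ t, β t ≠ 0)
    (haD : Differentiable ℝ a) (hcD : Continuous c) (hdD : Continuous d)
    (hαD : Differentiable ℝ α) (hβD : Differentiable ℝ β)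
    (hδD : Differentiable ℝ δ) (hεD : Differentiable ℝ ε)
    (hlam : ∀ t, deriv (lamF c d) t = -(c t - 2 * d t) * lamF c d t)
    (hdP : ∀ (ψ : ℝ → ℂ), ContDiff ℝ (⊤ : ℕ∞) ψ → ∀ t x,
      deriv (fun s => Pop c d α β δ s ψ x) t
        + Complex.I⁻¹ * (Pop c d α β δ t (Ham a b c d f g t ψ) x
            - HamAdj a b c d f g t (Pop c d α β δ t ψ) x)
      = -2 * c₀ * a t * (β t) ^ 2 * Qop c d β ε t ψ x)
    (hdQ : ∀ (ψ : ℝ → ℂ), ContDiff ℝ (⊤ : ℕ∞) ψ → ∀ t x,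
      deriv (fun s => Qop c d β ε s ψ x) t
        + Complex.I⁻¹ * (Qop c d β ε t (Ham a b c d f g t ψ) x
            - HamAdj a b c d f g t (Qop c d β ε t ψ) x)
      = 2 * a t * (β t) ^ 2 * Pop c d α β δ t ψ x)
    (ψ : ℝ → ℂ) (hψ : ContDiff ℝ (⊤ : ℕ∞) ψ) (t x : ℝ) :
    deriv (fun s => Einv c d α β δ ε c₀ s ψ x) t
      + Complex.I⁻¹ * (Einv c d α β δ ε c₀ t (Ham a b c d f g t ψ) x
          - HamAdj a b c d f g t (Einv c d α β δ ε c₀ t ψ) x)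
      = 0 := by

  -- scalar derivative facts
  have hlR := lamF_hasDeriv c d hcD hdD
  have hlC : HasDerivAt (fun s => ((lamF c d s : ℝ) : ℂ)) ((-(c t - 2 * d t) * lamF c d t : ℝ) : ℂ) t :=
    (hlR t).ofReal_comp
  have hβC : HasDerivAt (fun s => ((β s : ℝ) : ℂ)) ((deriv β t : ℝ) : ℂ) t := ((hβD t).hasDerivAt).ofReal_comp
  have hαC : HasDerivAt (fun s => ((α s : ℝ) : ℂ)) ((deriv α t : ℝ) : ℂ) t := ((hαD t).hasDerivAt).ofReal_comp
  have hδC : HasDerivAt (fun s => ((δ s : ℝ) : ℂ)) ((deriv δ t : ℝ) : ℂ) t := ((hδD t).hasDerivAt).ofReal_comp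
  have hεC : HasDerivAt (fun s => ((ε s : ℝ) : ℂ)) ((deriv ε t : ℝ) : ℂ) t := ((hεD t).hasDerivAt).ofReal_comp
  have hβne : ((β t : ℝ) : ℂ) ≠ 0 := Complex.ofReal_ne_zero.mpr (hβ t)
  have hlne : ((lamF c d t : ℝ) : ℂ) ≠ 0 := Complex.ofReal_ne_zero.mpr (ne_of_gt (lamF_pos c d t))
  obtain ⟨r', hr⟩ : ∃ z, HasDerivAt (fun s => (((lamF c d s : ℝ) : ℂ) / ((β s : ℝ) : ℂ))) z t := ⟨_, hlC.div hβC hβne⟩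
  obtain ⟨s', hs⟩ : ∃ z, HasDerivAt (fun s => (-(2 * ((α s : ℝ) : ℂ)) * (((lamF c d s : ℝ) : ℂ) / ((β s : ℝ) : ℂ)))) z t :=
    ⟨_, ((hαC.const_mul (2 : ℂ)).neg).mul hr⟩
  obtain ⟨t', ht⟩ : ∃ z, HasDerivAt (fun s => (-((δ s : ℝ) : ℂ) * (((lamF c d s : ℝ) : ℂ) / ((β s : ℝ) : ℂ)))) z t := ⟨_, (hδC.neg).mul hr⟩
  -- s-derivative of Pop applied to a fixed function
  have E1 : ∀ (φ : ℝ → ℂ) (u : ℝ), deriv (fun s => Pop c d α β δ s φ u) t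
      = r' * (-Complex.I * deriv φ u) + s' * (((u : ℝ) : ℂ) * φ u) + t' * φ u := by
    intro φ u
    have hfun : (fun s => Pop c d α β δ s φ u) = fun s =>
        (((lamF c d s : ℝ) : ℂ) / ((β s : ℝ) : ℂ)) * (-Complex.I * deriv φ u) + (-(2 * ((α s : ℝ) : ℂ)) * (((lamF c d s : ℝ) : ℂ) / ((β s : ℝ) : ℂ))) * (((u : ℝ) : ℂ) * φ u) + (-((δ s : ℝ) : ℂ) * (((lamF c d s : ℝ) : ℂ) / ((β s : ℝ) : ℂ))) * φ u :=
      funext fun s => Pop_shape c d α β δ s φ u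
    rw [hfun]
    exact (((hr.mul_const _).add (hs.mul_const _)).add (ht.mul_const _)).deriv
  -- s-derivative of Qop applied to a fixed function
  have hNd : ∀ u : ℝ, HasDerivAt (fun s => (((lamF c d s : ℝ) : ℂ) * (((β s : ℝ) : ℂ) * ((u : ℝ) : ℂ) + ((ε s : ℝ) : ℂ)))) ((((-(c t - 2 * d t) * lamF c d t : ℝ) : ℂ) * (((β t : ℝ) : ℂ) * ((u : ℝ) : ℂ) + ((ε t : ℝ) : ℂ)) + ((lamF c d t : ℝ) : ℂ) * (((deriv β t : ℝ) : ℂ) * ((u : ℝ) : ℂ) + ((deriv ε t : ℝ) : ℂ)))) t :=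
    fun u => hlC.mul ((hβC.mul_const _).add hεC)
  have E1Q : ∀ (φ : ℝ → ℂ) (u : ℝ), deriv (fun s => Qop c d β ε s φ u) t = (((-(c t - 2 * d t) * lamF c d t : ℝ) : ℂ) * (((β t : ℝ) : ℂ) * ((u : ℝ) : ℂ) + ((ε t : ℝ) : ℂ)) + ((lamF c d t : ℝ) : ℂ) * (((deriv β t : ℝ) : ℂ) * ((u : ℝ) : ℂ) + ((deriv ε t : ℝ) : ℂ))) * φ u := by
    intro φ u
    have hfun : (fun s => Qop c d β ε s φ u) = fun s => (((lamF c d s : ℝ) : ℂ) * (((β s : ℝ) : ℂ) * ((u : ℝ) : ℂ) + ((ε s : ℝ) : ℂ))) * φ u := funext fun s => rfl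
    rw [hfun]
    exact ((hNd u).mul_const _).deriv
  -- derivative of the prefactor
  have hMd : HasDerivAt (fun s => (((lamF c d s)⁻¹ : ℝ) : ℂ) / 2) ((((c t : ℝ) : ℂ) - 2 * ((d t : ℝ) : ℂ)) * ((((lamF c d t)⁻¹ : ℝ) : ℂ) / 2)) t := by
    have hlne' : lamF c d t ≠ 0 := ne_of_gt (lamF_pos c d t)
    have h0 := (((hlR t).inv hlne').div_const 2).ofReal_comp
    have hfun : (fun s => (((lamF c d s)⁻¹ : ℝ) : ℂ) / 2)
        = fun s => (((lamF c d s)⁻¹ / 2 : ℝ) : ℂ) := by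
      funext s; push_cast; ring
    rw [hfun]
    convert h0 using 1
    · rfl
    rw [show (-(-(c t - 2 * d t) * lamF c d t) / lamF c d t ^ 2 / 2 : ℝ)
        = (c t - 2 * d t) * ((lamF c d t)⁻¹ / 2) by field_simp]
    push_cast
    ring
  -- time derivative of P(P ψ) at x
  have hFfun : (fun s => Pop c d α β δ s (Pop c d α β δ s ψ) x) = fun s =>
      (((lamF c d s : ℝ) : ℂ) / ((β s : ℝ) : ℂ)) * (-Complex.I * ((((lamF c d s : ℝ) : ℂ) / ((β s : ℝ) : ℂ)) * (-Complex.I * deriv (deriv ψ) x)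
        + (-(2 * ((α s : ℝ) : ℂ)) * (((lamF c d s : ℝ) : ℂ) / ((β s : ℝ) : ℂ))) * (ψ x + ((x : ℝ) : ℂ) * deriv ψ x) + (-((δ s : ℝ) : ℂ) * (((lamF c d s : ℝ) : ℂ) / ((β s : ℝ) : ℂ))) * deriv ψ x))
      + (-(2 * ((α s : ℝ) : ℂ)) * (((lamF c d s : ℝ) : ℂ) / ((β s : ℝ) : ℂ))) * (((x : ℝ) : ℂ) * ((((lamF c d s : ℝ) : ℂ) / ((β s : ℝ) : ℂ)) * (-Complex.I * deriv ψ x)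
        + (-(2 * ((α s : ℝ) : ℂ)) * (((lamF c d s : ℝ) : ℂ) / ((β s : ℝ) : ℂ))) * (((x : ℝ) : ℂ) * ψ x) + (-((δ s : ℝ) : ℂ) * (((lamF c d s : ℝ) : ℂ) / ((β s : ℝ) : ℂ))) * ψ x))
      + (-((δ s : ℝ) : ℂ) * (((lamF c d s : ℝ) : ℂ) / ((β s : ℝ) : ℂ))) * ((((lamF c d s : ℝ) : ℂ) / ((β s : ℝ) : ℂ)) * (-Complex.I * deriv ψ x)
        + (-(2 * ((α s : ℝ) : ℂ)) * (((lamF c d s : ℝ) : ℂ) / ((β s : ℝ) : ℂ))) * (((x : ℝ) : ℂ) * ψ x) + (-((δ s : ℝ) : ℂ) * (((lamF c d s : ℝ) : ℂ) / ((β s : ℝ) : ℂ))) * ψ x) := by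
    funext s
    rw [Pop_shape c d α β δ s (Pop c d α β δ s ψ) x, deriv_Pop c d α β δ s hψ x,
      Pop_shape c d α β δ s ψ x]
  have hInner1 := ((hr.mul_const (-Complex.I * deriv (deriv ψ) x)).add
    (hs.mul_const (ψ x + ((x : ℝ) : ℂ) * deriv ψ x))).add (ht.mul_const (deriv ψ x))
  have hInner2 := ((hr.mul_const (-Complex.I * deriv ψ x)).add
    (hs.mul_const (((x : ℝ) : ℂ) * ψ x))).add (ht.mul_const (ψ x))
  have hFb := ((hr.mul (hInner1.const_mul (-Complex.I))).add
    (hs.mul (hInner2.const_mul ((x : ℝ) : ℂ)))).add (ht.mul hInner2)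
  have hGfun : (fun s => Qop c d β ε s (Qop c d β ε s ψ) x) = fun s => (((lamF c d s : ℝ) : ℂ) * (((β s : ℝ) : ℂ) * ((x : ℝ) : ℂ) + ((ε s : ℝ) : ℂ))) * ((((lamF c d s : ℝ) : ℂ) * (((β s : ℝ) : ℂ) * ((x : ℝ) : ℂ) + ((ε s : ℝ) : ℂ))) * ψ x) :=
    funext fun s => rfl
  have hEfun : (fun s => Einv c d α β δ ε c₀ s ψ x) = fun s =>
      (((lamF c d s)⁻¹ : ℝ) : ℂ) / 2 * (((((lamF c d s : ℝ) : ℂ) / ((β s : ℝ) : ℂ)) * (-Complex.I * ((((lamF c d s : ℝ) : ℂ) / ((β s : ℝ) : ℂ)) * (-Complex.I * deriv (deriv ψ) x)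
        + (-(2 * ((α s : ℝ) : ℂ)) * (((lamF c d s : ℝ) : ℂ) / ((β s : ℝ) : ℂ))) * (ψ x + ((x : ℝ) : ℂ) * deriv ψ x) + (-((δ s : ℝ) : ℂ) * (((lamF c d s : ℝ) : ℂ) / ((β s : ℝ) : ℂ))) * deriv ψ x))
      + (-(2 * ((α s : ℝ) : ℂ)) * (((lamF c d s : ℝ) : ℂ) / ((β s : ℝ) : ℂ))) * (((x : ℝ) : ℂ) * ((((lamF c d s : ℝ) : ℂ) / ((β s : ℝ) : ℂ)) * (-Complex.I * deriv ψ x)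
        + (-(2 * ((α s : ℝ) : ℂ)) * (((lamF c d s : ℝ) : ℂ) / ((β s : ℝ) : ℂ))) * (((x : ℝ) : ℂ) * ψ x) + (-((δ s : ℝ) : ℂ) * (((lamF c d s : ℝ) : ℂ) / ((β s : ℝ) : ℂ))) * ψ x))
      + (-((δ s : ℝ) : ℂ) * (((lamF c d s : ℝ) : ℂ) / ((β s : ℝ) : ℂ))) * ((((lamF c d s : ℝ) : ℂ) / ((β s : ℝ) : ℂ)) * (-Complex.I * deriv ψ x)
        + (-(2 * ((α s : ℝ) : ℂ)) * (((lamF c d s : ℝ) : ℂ) / ((β s : ℝ) : ℂ))) * (((x : ℝ) : ℂ) * ψ x) + (-((δ s : ℝ) : ℂ) * (((lamF c d s : ℝ) : ℂ) / ((β s : ℝ) : ℂ))) * ψ x))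
        + ((c₀ : ℝ) : ℂ) * ((((lamF c d s : ℝ) : ℂ) * (((β s : ℝ) : ℂ) * ((x : ℝ) : ℂ) + ((ε s : ℝ) : ℂ))) * ((((lamF c d s : ℝ) : ℂ) * (((β s : ℝ) : ℂ) * ((x : ℝ) : ℂ) + ((ε s : ℝ) : ℂ))) * ψ x))) := by
    funext s
    show (((lamF c d s)⁻¹ : ℝ) : ℂ) / 2 * (Pop c d α β δ s (Pop c d α β δ s ψ) x
        + ((c₀ : ℝ) : ℂ) * Qop c d β ε s (Qop c d β ε s ψ) x) = _
    rw [congrFun hFfun s, congrFun hGfun s]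
  -- derivative of E
  have hEd : deriv (fun s => Einv c d α β δ ε c₀ s ψ x) t
      = (((c t : ℝ) : ℂ) - 2 * ((d t : ℝ) : ℂ)) * ((((lamF c d t)⁻¹ : ℝ) : ℂ) / 2) * (Pop c d α β δ t (Pop c d α β δ t ψ) x + ((c₀ : ℝ) : ℂ) * Qop c d β ε t (Qop c d β ε t ψ) x)
        + ((((lamF c d t)⁻¹ : ℝ) : ℂ) / 2) * (((r' * (-Complex.I * deriv (Pop c d α β δ t ψ) x) + s' * (((x : ℝ) : ℂ) * Pop c d α β δ t ψ x) + t' * Pop c d α β δ t ψ x) + Pop c d α β δ t (fun u : ℝ => r' * (-Complex.I * deriv ψ u) + s' * (((u : ℝ) : ℂ) * ψ u) + t' * ψ u) x) + ((c₀ : ℝ) : ℂ) * ((((-(c t - 2 * d t) * lamF c d t : ℝ) : ℂ) * (((β t : ℝ) : ℂ) * ((x : ℝ) : ℂ) + ((ε t : ℝ) : ℂ)) + ((lamF c d t : ℝ) : ℂ) * (((deriv β t : ℝ) : ℂ) * ((x : ℝ) : ℂ) + ((deriv ε t : ℝ) : ℂ))) * ((((lamF c d t : ℝ) : ℂ) *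 (((β t : ℝ) : ℂ) * ((x : ℝ) : ℂ) + ((ε t : ℝ) : ℂ))) * ψ x)
          + (((lamF c d t : ℝ) : ℂ) * (((β t : ℝ) : ℂ) * ((x : ℝ) : ℂ) + ((ε t : ℝ) : ℂ))) * ((((-(c t - 2 * d t) * lamF c d t : ℝ) : ℂ) * (((β t : ℝ) : ℂ) * ((x : ℝ) : ℂ) + ((ε t : ℝ) : ℂ)) + ((lamF c d t : ℝ) : ℂ) * (((deriv β t : ℝ) : ℂ) * ((x : ℝ) : ℂ) + ((deriv ε t : ℝ) : ℂ))) * ψ x))) := by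
    rw [hEfun]
    refine Eq.trans ((hMd.mul (hFb.add
      (((hNd x).mul ((hNd x).mul_const (ψ x))).const_mul ((c₀ : ℝ) : ℂ)))).deriv) ?_
    rw [show Qop c d β ε t (Qop c d β ε t ψ) x = (((lamF c d t : ℝ) : ℂ) * (((β t : ℝ) : ℂ) * ((x : ℝ) : ℂ) + ((ε t : ℝ) : ℂ))) * ((((lamF c d t : ℝ) : ℂ) * (((β t : ℝ) : ℂ) * ((x : ℝ) : ℂ) + ((ε t : ℝ) : ℂ))) * ψ x) from rfl,
      show Pop c d α β δ t (Pop c d α β δ t ψ) x = (((lamF c d t : ℝ) : ℂ) / ((β t : ℝ) : ℂ)) * (-Complex.I * ((((lamF c d t : ℝ) : ℂ) / ((β t : ℝ) : ℂ)) * (-Complex.I * deriv (deriv ψ) x)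
        + (-(2 * ((α t : ℝ) : ℂ)) * (((lamF c d t : ℝ) : ℂ) / ((β t : ℝ) : ℂ))) * (ψ x + ((x : ℝ) : ℂ) * deriv ψ x) + (-((δ t : ℝ) : ℂ) * (((lamF c d t : ℝ) : ℂ) / ((β t : ℝ) : ℂ))) * deriv ψ x))
      + (-(2 * ((α t : ℝ) : ℂ)) * (((lamF c d t : ℝ) : ℂ) / ((β t : ℝ) : ℂ))) * (((x : ℝ) : ℂ) * ((((lamF c d t : ℝ) : ℂ) / ((β t : ℝ) : ℂ)) * (-Complex.I * deriv ψ x)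
        + (-(2 * ((α t : ℝ) : ℂ)) * (((lamF c d t : ℝ) : ℂ) / ((β t : ℝ) : ℂ))) * (((x : ℝ) : ℂ) * ψ x) + (-((δ t : ℝ) : ℂ) * (((lamF c d t : ℝ) : ℂ) / ((β t : ℝ) : ℂ))) * ψ x))
      + (-((δ t : ℝ) : ℂ) * (((lamF c d t : ℝ) : ℂ) / ((β t : ℝ) : ℂ))) * ((((lamF c d t : ℝ) : ℂ) / ((β t : ℝ) : ℂ)) * (-Complex.I * deriv ψ x)
        + (-(2 * ((α t : ℝ) : ℂ)) * (((lamF c d t : ℝ) : ℂ) / ((β t : ℝ) : ℂ))) * (((x : ℝ) : ℂ) * ψ x) + (-((δ t : ℝ) : ℂ) * (((lamF c d t : ℝ) : ℂ) / ((β t : ℝ) : ℂ))) * ψ x) from congrFun hFfun t,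
      deriv_Pop c d α β δ t hψ x, Pop_shape c d α β δ t ψ x,
      Pop_shape c d α β δ t (fun u : ℝ => r' * (-Complex.I * deriv ψ u) + s' * (((u : ℝ) : ℂ) * ψ u) + t' * ψ u) x, deriv_shape hψ r' s' t' x]
    simp only [Pi.add_apply, Pi.mul_apply]
    ring
  -- smoothness of auxiliary functions
  have hPψS : ContDiff ℝ (⊤ : ℕ∞) (Pop c d α β δ t ψ) := Pop_smooth c d α β δ t hψ
  have hQψS : ContDiff ℝ (⊤ : ℕ∞) (Qop c d β ε t ψ) := Qop_smooth c d β ε t hψ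
  have hWpS : ContDiff ℝ (⊤ : ℕ∞) (fun u : ℝ => r' * (-Complex.I * deriv ψ u) + s' * (((u : ℝ) : ℂ) * ψ u) + t' * ψ u) := shape_smooth hψ r' s' t'
  -- rewrite P(H ψ) via the Heisenberg relation for ψ
  have hPHfun : Pop c d α β δ t (Ham a b c d f g t ψ) = fun u => (1 : ℂ) * HamAdj a b c d f g t (Pop c d α β δ t ψ) u
      + (Complex.I * (-2 * ((c₀ : ℝ) : ℂ) * ((a t : ℝ) : ℂ) * ((β t : ℝ) : ℂ) ^ 2)) * Qop c d β ε t ψ u + (-Complex.I) * (fun u : ℝ => r' * (-Complex.I * deriv ψ u) + s' * (((u : ℝ) : ℂ) * ψ u) + t' * ψ u) u := by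
    funext u
    have h := hdP ψ hψ t u
    rw [E1 ψ u] at h
    rw [solve_inv_I h]
    ring
  have h2' : Pop c d α β δ t (Pop c d α β δ t (Ham a b c d f g t ψ)) x
      = (1 : ℂ) * Pop c d α β δ t (HamAdj a b c d f g t (Pop c d α β δ t ψ)) x + (Complex.I * (-2 * ((c₀ : ℝ) : ℂ) * ((a t : ℝ) : ℂ) * ((β t : ℝ) : ℂ) ^ 2)) * Pop c d α β δ t (Qop c d β ε t ψ) x
        + (-Complex.I) * Pop c d α β δ t (fun u : ℝ => r' * (-Complex.I * deriv ψ u) + s' * (((u : ℝ) : ℂ) * ψ u) + t' * ψ u) x := by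
    rw [hPHfun]
    exact Pop_comb3 c d α β δ t (smooth_diff (HamAdj_smooth a b c d f g t hPψS))
      (smooth_diff hQψS) (smooth_diff hWpS) _ _ _ x
  -- Heisenberg relation for P ψ
  have hHamPfun : Ham a b c d f g t (Pop c d α β δ t ψ) = fun u => (1 : ℂ) * HamAdj a b c d f g t (Pop c d α β δ t ψ) u
      + (Complex.I * (((c t : ℝ) : ℂ) - 2 * ((d t : ℝ) : ℂ))) * Pop c d α β δ t ψ u + (0 : ℂ) * ψ u := by
    funext u; rw [Ham_eq_adj]; ring
  have h3 := hdP (Pop c d α β δ t ψ) hPψS t x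
  rw [E1 (Pop c d α β δ t ψ) x, hHamPfun, Pop_comb3 c d α β δ t
    (smooth_diff (HamAdj_smooth a b c d f g t hPψS)) (smooth_diff hPψS) (smooth_diff hψ)
    _ _ _ x] at h3
  -- Heisenberg relations on the Q side
  have h6 := hdQ ψ hψ t x
  rw [E1Q ψ x] at h6
  have h5 := hdQ (Qop c d β ε t ψ) hQψS t x
  rw [E1Q (Qop c d β ε t ψ) x] at h5
  -- H† applied to E ψ
  have hEψfun : Einv c d α β δ ε c₀ t ψ = fun u => ((((lamF c d t)⁻¹ : ℝ) : ℂ) / 2) * Pop c d α β δ t (Pop c d α β δ t ψ) u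
      + (((((lamF c d t)⁻¹ : ℝ) : ℂ) / 2) * ((c₀ : ℝ) : ℂ)) * Qop c d β ε t (Qop c d β ε t ψ) u + (0 : ℂ) * ψ u := by
    funext u
    show ((((lamF c d t)⁻¹ : ℝ) : ℂ) / 2) * (Pop c d α β δ t (Pop c d α β δ t ψ) u + ((c₀ : ℝ) : ℂ) * Qop c d β ε t (Qop c d β ε t ψ) u) = _
    ring
  have hHE : HamAdj a b c d f g t (Einv c d α β δ ε c₀ t ψ) x
      = ((((lamF c d t)⁻¹ : ℝ) : ℂ) / 2) * HamAdj a b c d f g t (Pop c d α β δ t (Pop c d α β δ t ψ)) x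
        + (((((lamF c d t)⁻¹ : ℝ) : ℂ) / 2) * ((c₀ : ℝ) : ℂ)) * HamAdj a b c d f g t (Qop c d β ε t (Qop c d β ε t ψ)) x
        + (0 : ℂ) * HamAdj a b c d f g t ψ x := by
    rw [hEψfun]
    exact HamAdj_comb3 a b c d f g t (Pop_smooth c d α β δ t hPψS)
      (Qop_smooth c d β ε t hQψS) hψ _ _ _ x
  -- E applied to H ψ
  have hEH : Einv c d α β δ ε c₀ t (Ham a b c d f g t ψ) x
      = ((((lamF c d t)⁻¹ : ℝ) : ℂ) / 2) * (Pop c d α β δ t (Pop c d α β δ t (Ham a b c d f g t ψ)) x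
        + ((c₀ : ℝ) : ℂ) * ((((lamF c d t : ℝ) : ℂ) * (((β t : ℝ) : ℂ) * ((x : ℝ) : ℂ) + ((ε t : ℝ) : ℂ))) * Qop c d β ε t (Ham a b c d f g t ψ) x)) := rfl
  -- pointwise identifications of Q applications
  have q1 : Qop c d β ε t ψ x = (((lamF c d t : ℝ) : ℂ) * (((β t : ℝ) : ℂ) * ((x : ℝ) : ℂ) + ((ε t : ℝ) : ℂ))) * ψ x := rfl
  have q2 : Qop c d β ε t (Pop c d α β δ t ψ) x = (((lamF c d t : ℝ) : ℂ) * (((β t : ℝ) : ℂ) * ((x : ℝ) : ℂ) + ((ε t : ℝ) : ℂ))) * Pop c d α β δ t ψ x := rfl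
  have q3 : Qop c d β ε t (Qop c d β ε t ψ) x = (((lamF c d t : ℝ) : ℂ) * (((β t : ℝ) : ℂ) * ((x : ℝ) : ℂ) + ((ε t : ℝ) : ℂ))) * ((((lamF c d t : ℝ) : ℂ) * (((β t : ℝ) : ℂ) * ((x : ℝ) : ℂ) + ((ε t : ℝ) : ℂ))) * ψ x) := rfl
  have q6 : Qop c d β ε t (Ham a b c d f g t (Qop c d β ε t ψ)) x = (((lamF c d t : ℝ) : ℂ) * (((β t : ℝ) : ℂ) * ((x : ℝ) : ℂ) + ((ε t : ℝ) : ℂ))) * Ham a b c d f g t (Qop c d β ε t ψ) x := rfl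
  have hQHA := Ham_eq_adj a b c d f g t (Qop c d β ε t ψ) x
  -- final assembly
  rw [hEd, hEH, h2', hHE]
  rw [Complex.inv_I] at h3 h5 h6 ⊢
  linear_combination ((((lamF c d t)⁻¹ : ℝ) : ℂ) / 2) * h3 + (((((lamF c d t)⁻¹ : ℝ) : ℂ) / 2) * ((c₀ : ℝ) : ℂ)) * h5
    + (((((lamF c d t)⁻¹ : ℝ) : ℂ) / 2) * ((c₀ : ℝ) : ℂ) * (((lamF c d t : ℝ) : ℂ) * (((β t : ℝ) : ℂ) * ((x : ℝ) : ℂ) + ((ε t : ℝ) : ℂ)))) * h6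
    + (Complex.I * ((((lamF c d t)⁻¹ : ℝ) : ℂ) / 2) * ((c₀ : ℝ) : ℂ)) * q6
    + (Complex.I * ((((lamF c d t)⁻¹ : ℝ) : ℂ) / 2) * ((c₀ : ℝ) : ℂ) * (((lamF c d t : ℝ) : ℂ) * (((β t : ℝ) : ℂ) * ((x : ℝ) : ℂ) + ((ε t : ℝ) : ℂ)))) * hQHA
    + (-(((((lamF c d t)⁻¹ : ℝ) : ℂ) / 2) * ((c₀ : ℝ) : ℂ) * (2 * ((a t : ℝ) : ℂ) * ((β t : ℝ) : ℂ) ^ 2))) * q2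
    + (((((lamF c d t)⁻¹ : ℝ) : ℂ) / 2) * ((c₀ : ℝ) : ℂ) * (Complex.I ^ 2 * (((lamF c d t : ℝ) : ℂ) * (((β t : ℝ) : ℂ) * ((x : ℝ) : ℂ) + ((ε t : ℝ) : ℂ))) * (((c t : ℝ) : ℂ) - 2 * ((d t : ℝ) : ℂ)) - (((-(c t - 2 * d t) * lamF c d t : ℝ) : ℂ) * (((β t : ℝ) : ℂ) * ((x : ℝ) : ℂ) + ((ε t : ℝ) : ℂ)) + ((lamF c d t : ℝ) : ℂ) * (((deriv β t : ℝ) : ℂ) * ((x : ℝ) : ℂ) + ((deriv ε t : ℝ) : ℂ))))) * q1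
    + ((((c t : ℝ) : ℂ) - 2 * ((d t : ℝ) : ℂ)) * ((((lamF c d t)⁻¹ : ℝ) : ℂ) / 2) * ((c₀ : ℝ) : ℂ)) * q3
    + (((((lamF c d t)⁻¹ : ℝ) : ℂ) / 2) * ((((c t : ℝ) : ℂ) - 2 * ((d t : ℝ) : ℂ)) * Pop c d α β δ t (Pop c d α β δ t ψ) x + Pop c d α β δ t (fun u : ℝ => r' * (-Complex.I * deriv ψ u) + s' * (((u : ℝ) : ℂ) * ψ u) + t' * ψ u) x
        + ((c₀ : ℝ) : ℂ) * (2 * ((a t : ℝ) : ℂ) * ((β t : ℝ) : ℂ) ^ 2) * Pop c d α β δ t (Qop c d β ε t ψ) x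
        + (((c t : ℝ) : ℂ) - 2 * ((d t : ℝ) : ℂ)) * ((c₀ : ℝ) : ℂ) * (((lamF c d t : ℝ) : ℂ) * (((β t : ℝ) : ℂ) * ((x : ℝ) : ℂ) + ((ε t : ℝ) : ℂ))) ^ 2 * ψ x)) * Complex.I_sq
end

section
/- Suppose α, β, γ, δ, ε, κ satisfy the Riccati-type system with c₀ = 0: α' + b + 2cα + 4aα² = 0, β' + (c + 4aα)β = 0, γ' + aβ² = 0, δ' + (c + 4aα)δ = f + 2gα, ε' = (g − 2aδ)β, κ' = gδ − aδ². Then K(x,y,t) = μ(t)^{-1/2} exp(i(αx² + βxy + γy² + δx + εy + κ)) satisfies, for each fixed y ∈ ℝ, the Schrödinger equation iK_t = −aK_xx + bx²K − icxK_x − idK − fxK + igK_x, where μ'/μ = 4aα + 2d and μ > 0. -/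
/-!
Write `K = μ^{-1/2} e^{iΦ}` with `Φ` quadratic in `x`. Then `K_x = iΦ_x K`,
`K_xx = (2iα - Φ_x²) K` and `K_t = (-μ'/(2μ) + iΦ_t) K`, so after division by `K` the
Schrödinger equation splits into its imaginary part `μ'/μ = 4aα + 2d` and its real part, the
Hamilton–Jacobi equation `Φ_t + aΦ_x² + bx² + cxΦ_x - fx - gΦ_x = 0`. Comparing the
coefficients of `x², xy, y², x, y, 1` in the latter gives exactly the Riccati-type system.
-/

open Complex

theorem hasDerivAt_mul_cexp_quadratic (C p q r : ℂ) (u : ℝ) :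
    HasDerivAt (fun v : ℝ => C * cexp (I * (p * v ^ 2 + q * v + r)))
      (I * (2 * p * u + q) * (C * cexp (I * (p * u ^ 2 + q * u + r)))) u := by
  have hquad : HasDerivAt (fun z : ℂ => I * (p * z ^ 2 + q * z + r)) (I * (2 * p * u + q)) u := by
    have h := (((hasDerivAt_pow 2 (u : ℂ)).const_mul p).add
      ((hasDerivAt_id' (u : ℂ)).const_mul q)).add_const r
    exact (h.const_mul I).congr_deriv (by norm_num; ring)
  exact (hquad.comp_ofReal.cexp.const_mul C).congr_deriv (by ring)

theorem deriv_mul_cexp_quadratic (C p q r : ℂ) :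
    deriv (fun v : ℝ => C * cexp (I * (p * v ^ 2 + q * v + r)))
      = fun u : ℝ => I * (2 * p * u + q) * (C * cexp (I * (p * u ^ 2 + q * u + r))) :=
  funext fun u => (hasDerivAt_mul_cexp_quadratic C p q r u).deriv

theorem deriv_deriv_mul_cexp_quadratic (C p q r : ℂ) (u : ℝ) :
    deriv (deriv fun v : ℝ => C * cexp (I * (p * v ^ 2 + q * v + r))) u
      = (2 * I * p - (2 * p * u + q) ^ 2) * (C * cexp (I * (p * u ^ 2 + q * u + r))) := by
  have hlin : HasDerivAt (fun v : ℝ => I * (2 * p * v + q)) (I * (2 * p)) u :=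
    ((((hasDerivAt_id' (u : ℂ)).const_mul (2 * p)).add_const q).const_mul I).comp_ofReal
      |>.congr_deriv (by ring)
  rw [deriv_mul_cexp_quadratic, (hlin.fun_mul (hasDerivAt_mul_cexp_quadratic C p q r u)).deriv]
  linear_combination (C * cexp (I * (p * u ^ 2 + q * u + r))) * (2 * p * u + q) ^ 2 * I_sq

theorem hasDerivAt_inv_sqrt_mul_cexp {μ φ : ℝ → ℝ} {μ' φ' t : ℝ}
    (hμ : HasDerivAt μ μ' t) (hμpos : 0 < μ t) (hφ : HasDerivAt φ φ' t) :
    HasDerivAt (fun s => (Real.sqrt (μ s) : ℂ)⁻¹ * cexp (I * φ s))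
      ((-(μ' / μ t) / 2 + I * φ') * ((Real.sqrt (μ t) : ℂ)⁻¹ * cexp (I * φ t))) t := by
  have hsqrt_ne : (Real.sqrt (μ t) : ℂ) ≠ 0 := by
    exact_mod_cast (Real.sqrt_pos.mpr hμpos).ne'
  have hsq : (Real.sqrt (μ t) : ℂ) ^ 2 = μ t := by
    exact_mod_cast Real.sq_sqrt hμpos.le
  have hμ_ne : (μ t : ℂ) ≠ 0 := by exact_mod_cast hμpos.ne'
  have hamp := ((hμ.sqrt hμpos.ne').ofReal_comp).fun_inv hsqrt_ne
  have hphase := ((hφ.ofReal_comp).const_mul I).cexp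
  refine (hamp.mul hphase).congr_deriv ?_
  push_cast
  field_simp
  rw [hsq]
  ring

theorem hasDerivAt_quadratic_phase {α β γ δ ε κ : ℝ → ℝ} {α' β' γ' δ' ε' κ' t : ℝ}
    (x y : ℝ) (hα : HasDerivAt α α' t) (hβ : HasDerivAt β β' t) (hγ : HasDerivAt γ γ' t)
    (hδ : HasDerivAt δ δ' t) (hε : HasDerivAt ε ε' t) (hκ : HasDerivAt κ κ' t) :
    HasDerivAt (fun s => α s * x ^ 2 + β s * x * y + γ s * y ^ 2 + δ s * x + ε s * y + κ s)
      (α' * x ^ 2 + β' * x * y + γ' * y ^ 2 + δ' * x + ε' * y + κ') t :=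
  (((((hα.mul_const _).fun_add ((hβ.mul_const _).mul_const _)).fun_add (hγ.mul_const _)).fun_add
    (hδ.mul_const _)).fun_add (hε.mul_const _)).fun_add hκ

theorem hamiltonJacobi_of_riccati {a b c f g α β δ α' β' γ' δ' ε' κ' : ℝ} (x y : ℝ)
    (hα : α' + b + 2 * c * α + 4 * a * α ^ 2 = 0)
    (hβ : β' + (c + 4 * a * α) * β = 0)
    (hγ : γ' + a * β ^ 2 = 0)
    (hδ : δ' + (c + 4 * a * α) * δ = f + 2 * g * α)
    (hε : ε' = (g - 2 * a * δ) * β)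
    (hκ : κ' = g * δ - a * δ ^ 2) :
    α' * x ^ 2 + β' * x * y + γ' * y ^ 2 + δ' * x + ε' * y + κ'
      + a * (2 * α * x + (β * y + δ)) ^ 2 + b * x ^ 2 + c * x * (2 * α * x + (β * y + δ))
      - f * x - g * (2 * α * x + (β * y + δ)) = 0 := by
  linear_combination x ^ 2 * hα + x * y * hβ + y ^ 2 * hγ + x * hδ + y * hε + hκ

theorem schroedinger_identity_of_hamiltonJacobi {a b c d f g α φ' Q m x K : ℂ}
    (hm : m = 4 * a * α + 2 * d)
    (hHJ : φ' + a * Q ^ 2 + b * x ^ 2 + c * x * Q - f * x - g * Q = 0) :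
    I * ((-m / 2 + I * φ') * K)
      = -a * ((2 * I * α - Q ^ 2) * K) + b * x ^ 2 * K - I * c * x * (I * Q * K) - I * d * K
        - f * x * K + I * g * (I * Q * K) := by
  linear_combination K * (-(I / 2) * hm - hHJ) + K * (φ' + (c * x - g) * Q) * I_sq

theorem kernel_solves_schroedinger_general
    (a b c d f g : ℝ → ℝ)
    (α β γ δ ε κ μ : ℝ → ℝ)
    (hαD : Differentiable ℝ α) (hβD : Differentiable ℝ β) (hγD : Differentiable ℝ γ)
    (hδD : Differentiable ℝ δ) (hεD : Differentiable ℝ ε) (hκD : Differentiable ℝ κ)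
    (hμD : Differentiable ℝ μ) (hμpos : ∀ t, 0 < μ t)
    -- the Riccati-type system (c₀ = 0)
    (hSysA : ∀ t, deriv α t + b t + 2 * c t * α t + 4 * a t * (α t) ^ 2 = 0)
    (hSysB : ∀ t, deriv β t + (c t + 4 * a t * α t) * β t = 0)
    (hSysC : ∀ t, deriv γ t + a t * (β t) ^ 2 = 0)
    (hSysD : ∀ t, deriv δ t + (c t + 4 * a t * α t) * δ t = f t + 2 * g t * α t)
    (hSysE : ∀ t, deriv ε t = (g t - 2 * a t * δ t) * β t)
    (hSysF : ∀ t, deriv κ t = g t * δ t - a t * (δ t) ^ 2)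
    (hμα : ∀ t, deriv μ t / μ t = 4 * a t * α t + 2 * d t)
    (K : ℝ → ℝ → ℝ → ℂ)
    (hK : ∀ x y t, K x y t = (Real.sqrt (μ t) : ℂ)⁻¹
      * Complex.exp (Complex.I * ((α t : ℂ) * x ^ 2 + (β t : ℂ) * x * y
          + (γ t : ℂ) * y ^ 2 + (δ t : ℂ) * x + (ε t : ℂ) * y + (κ t : ℂ)))) :
    ∀ (y : ℝ) (x t : ℝ),
      Complex.I * deriv (fun s => K x y s) t
        = -(a t : ℂ) * deriv (deriv (fun u => K u y t)) x
          + (b t : ℂ) * (x : ℂ) ^ 2 * K x y t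
          - Complex.I * (c t : ℂ) * (x : ℂ) * deriv (fun u => K u y t) x
          - Complex.I * (d t : ℂ) * K x y t
          - (f t : ℂ) * (x : ℂ) * K x y t
          + Complex.I * (g t : ℂ) * deriv (fun u => K u y t) x := by
  intro y x t
  have htime : ∀ s, K x y s = (Real.sqrt (μ s) : ℂ)⁻¹
      * cexp (I * ↑(α s * x ^ 2 + β s * x * y + γ s * y ^ 2 + δ s * x + ε s * y + κ s)) := by
    intro s; rw [hK]; push_cast; ring_nf
  have hspace : ∀ u, K u y t = (Real.sqrt (μ t) : ℂ)⁻¹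
      * cexp (I * (α t * u ^ 2 + (β t * y + δ t) * u + (γ t * y ^ 2 + ε t * y + κ t))) := by
    intro u; rw [hK]; ring_nf
  have hKt : deriv (fun s => K x y s) t
      = (-(deriv μ t / μ t) / 2 + I * ↑(deriv α t * x ^ 2 + deriv β t * x * y + deriv γ t * y ^ 2
        + deriv δ t * x + deriv ε t * y + deriv κ t)) * K x y t := by
    simp only [htime]
    exact (hasDerivAt_inv_sqrt_mul_cexp (hμD t).hasDerivAt (hμpos t)
      (hasDerivAt_quadratic_phase x y (hαD t).hasDerivAt (hβD t).hasDerivAt (hγD t).hasDerivAt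
        (hδD t).hasDerivAt (hεD t).hasDerivAt (hκD t).hasDerivAt)).deriv
  have hKx : deriv (fun u => K u y t) = fun u => I * (2 * α t * u + (β t * y + δ t)) * K u y t := by
    simp only [hspace]
    exact deriv_mul_cexp_quadratic _ _ _ _
  have hKxx : deriv (deriv fun u => K u y t) x
      = (2 * I * α t - (2 * α t * x + (β t * y + δ t)) ^ 2) * K x y t := by
    simp only [hspace]
    exact deriv_deriv_mul_cexp_quadratic _ _ _ _ x
  rw [hKt, hKxx, hKx]
  refine schroedinger_identity_of_hamiltonJacobi (by exact_mod_cast hμα t) ?_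
  exact_mod_cast hamiltonJacobi_of_riccati x y (hSysA t) (hSysB t) (hSysC t) (hSysD t)
    (hSysE t) (hSysF t)

/-- if `α, β, γ, δ, ε, κ` satisfy the Riccati-type system (`c₀ = 0`),
then `K(x,y,t) = μ^{-1/2} e^{i(αx² + βxy + γy² + δx + εy + κ)}` solves, for each
fixed `y`, the generalized driven harmonic oscillator Schrödinger equation. -/
theorem kernel_solves_schroedinger
    (a b c d f g : ℝ → ℝ) (ha : ∀ t, a t ≠ 0)
    (α β γ δ ε κ μ : ℝ → ℝ)
    (haD : Differentiable ℝ a) (hbD : Differentiable ℝ b) (hcD : Differentiable ℝ c)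
    (hdD : Differentiable ℝ d) (hfD : Differentiable ℝ f) (hgD : Differentiable ℝ g)
    (hαD : Differentiable ℝ α) (hβD : Differentiable ℝ β) (hγD : Differentiable ℝ γ)
    (hδD : Differentiable ℝ δ) (hεD : Differentiable ℝ ε) (hκD : Differentiable ℝ κ)
    (hμD : Differentiable ℝ μ) (hμpos : ∀ t, 0 < μ t)
    -- the Riccati-type system (c₀ = 0)
    (hSysA : ∀ t, deriv α t + b t + 2 * c t * α t + 4 * a t * (α t) ^ 2 = 0)
    (hSysB : ∀ t, deriv β t + (c t + 4 * a t * α t) * β t = 0)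
    (hSysC : ∀ t, deriv γ t + a t * (β t) ^ 2 = 0)
    (hSysD : ∀ t, deriv δ t + (c t + 4 * a t * α t) * δ t = f t + 2 * g t * α t)
    (hSysE : ∀ t, deriv ε t = (g t - 2 * a t * δ t) * β t)
    (hSysF : ∀ t, deriv κ t = g t * δ t - a t * (δ t) ^ 2)
    (hμα : ∀ t, deriv μ t / μ t = 4 * a t * α t + 2 * d t)
    (K : ℝ → ℝ → ℝ → ℂ)
    (hK : ∀ x y t, K x y t = (Real.sqrt (μ t) : ℂ)⁻¹
      * Complex.exp (Complex.I * ((α t : ℂ) * x ^ 2 + (β t : ℂ) * x * y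
          + (γ t : ℂ) * y ^ 2 + (δ t : ℂ) * x + (ε t : ℂ) * y + (κ t : ℂ)))) :
    ∀ (y : ℝ) (x t : ℝ),
      Complex.I * deriv (fun s => K x y s) t
        = -(a t : ℂ) * deriv (deriv (fun u => K u y t)) x
          + (b t : ℂ) * (x : ℂ) ^ 2 * K x y t
          - Complex.I * (c t : ℂ) * (x : ℂ) * deriv (fun u => K u y t) x
          - Complex.I * (d t : ℂ) * K x y t
          - (f t : ℂ) * (x : ℂ) * K x y t
          + Complex.I * (g t : ℂ) * deriv (fun u => K u y t) x :=
  kernel_solves_schroedinger_general a b c d f g α β γ δ ε κ μ hαD hβD hγD hδD hεD hκD hμD hμpos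
    hSysA hSysB hSysC hSysD hSysE hSysF hμα K hK
end

section
/- Assume α, β, δ, ε, κ satisfy the Ermakov-type system with c₀ = 1 (equations α' + b + 2cα + 4aα² = aβ⁴, β' + (c+4aα)β = 0, δ' + (c+4aα)δ = f + 2gα + 2aβ³ε, ε' = (g−2aδ)β, κ' = gδ − aδ² + aβ²ε²). Then the two expressions for the Berry phase derivative agree: −β^{-2}(ε² + n + 1/2)α' + εβ^{-1}δ' − κ' = (n + 1/2)[a(4α²/β² − β²) + (b + 2cα)/β²] + a(δ − 2αε/β)² + (ε/β)(f + bε/β) − (δ − 2αε/β)(g + cε/β). -/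
/-- for solutions of the Ermakov-type system (`c₀ = 1`), the two
expressions for the Berry phase derivative agree:
`−β⁻²(ε² + n + 1/2)α' + εβ⁻¹δ' − κ'`
`= (n + 1/2)[a(4α²/β² − β²) + (b + 2cα)/β²] + a(δ − 2αε/β)² + (ε/β)(f + bε/β)`
`  − (δ − 2αε/β)(g + cε/β)`. -/
theorem berry_phase_formulas_agree
    (a b c d f g : ℝ → ℝ) (ha : ∀ t, a t ≠ 0)
    (α β δ ε κ : ℝ → ℝ) (hβ : ∀ t, 0 < β t)
    (hαD : Differentiable ℝ α) (hβD : Differentiable ℝ β)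
    (hδD : Differentiable ℝ δ) (hεD : Differentiable ℝ ε)
    (hκD : Differentiable ℝ κ)
    (hSysA : ∀ t, deriv α t + b t + 2 * c t * α t + 4 * a t * (α t) ^ 2
        = a t * (β t) ^ 4)
    (hSysB : ∀ t, deriv β t + (c t + 4 * a t * α t) * β t = 0)
    (hSysD : ∀ t, deriv δ t + (c t + 4 * a t * α t) * δ t
        = f t + 2 * g t * α t + 2 * a t * (β t) ^ 3 * ε t)
    (hSysE : ∀ t, deriv ε t = (g t - 2 * a t * δ t) * β t)
    (hSysF : ∀ t, deriv κ t = g t * δ t - a t * (δ t) ^ 2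
        + a t * (β t) ^ 2 * (ε t) ^ 2)
    (n : ℕ) (t : ℝ) :
    -(β t)⁻¹ ^ 2 * ((ε t) ^ 2 + n + 1 / 2) * deriv α t
        + ε t * (β t)⁻¹ * deriv δ t - deriv κ t
      = ((n : ℝ) + 1 / 2) * (a t * (4 * (α t) ^ 2 / (β t) ^ 2 - (β t) ^ 2)
          + (b t + 2 * c t * α t) / (β t) ^ 2)
        + a t * (δ t - 2 * α t * ε t / β t) ^ 2
        + ε t / β t * (f t + b t * ε t / β t)
        - (δ t - 2 * α t * ε t / β t) * (g t + c t * ε t / β t) := by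
  have hb := (hβ t).ne'
  have hA : deriv α t = a t * (β t) ^ 4 - (b t + 2 * c t * α t + 4 * a t * (α t) ^ 2) := by
    have := hSysA t; linarith
  have hD : deriv δ t = f t + 2 * g t * α t + 2 * a t * (β t) ^ 3 * ε t
      - (c t + 4 * a t * α t) * δ t := by
    have := hSysD t; linarith
  rw [hA, hD, hSysF t]
  field_simp
  ring
end
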